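/- arXiv:0908.1498 — 8 statements merged into one kernel-verified Lean document; each statement's English description precedes it below -/
import Mathlib

section
/- Let 0 < m < n be integers and let S be a Binomial(n, m/n) random variable. Then E[min(S/m, (n−S)/(n−m))] ≥ 1 − √(m(n−m)) / (√n · min(m, n−m)). -/
/-!
Write `c = min(m, n-m)`. As `k/m = 1 + (k-m)/m` and `(n-k)/(n-m) = 1 + (m-k)/(n-m)`, both ratios
are at least `1 - |m-k|/c`, so the expectation is at least `1 - E|S-m|/c`. By Cauchy–Schwarz the
mean absolute deviation `E|S-m|` is at most the standard deviation `√(m(n-m)/n)`. The binomial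
probabilities are the Bernstein basis polynomials evaluated at `m/n`.
-/

open Finset Polynomial

theorem Finset.sum_mul_abs_le_sqrt_sum_mul_sq {ι : Type*} (s : Finset ι) {w : ι → ℝ}
    (d : ι → ℝ) (hw : ∀ i ∈ s, 0 ≤ w i) (hw₁ : ∑ i ∈ s, w i = 1) :
    ∑ i ∈ s, w i * |d i| ≤ √(∑ i ∈ s, w i * d i ^ 2) := by
  apply Real.le_sqrt_of_sq_le
  calc (∑ i ∈ s, w i * |d i|) ^ 2 ≤ (∑ i ∈ s, w i) * ∑ i ∈ s, w i * d i ^ 2 :=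
        sum_sq_le_sum_mul_sum_of_sq_le_mul s hw
          (fun i hi => mul_nonneg (hw i hi) (sq_nonneg _))
          (fun i _ => by rw [mul_pow, sq_abs]; exact (by ring : _ = _).le)
    _ = ∑ i ∈ s, w i * d i ^ 2 := by rw [hw₁, one_mul]

namespace bernsteinPolynomial

theorem eval_eq (n k : ℕ) (x : ℝ) :
    (bernsteinPolynomial ℝ n k).eval x = n.choose k * x ^ k * (1 - x) ^ (n - k) := by
  simp [bernsteinPolynomial]

theorem eval_nonneg (n k : ℕ) {x : ℝ} (hx₀ : 0 ≤ x) (hx₁ : x ≤ 1) :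
    0 ≤ (bernsteinPolynomial ℝ n k).eval x := by
  rw [eval_eq]
  have : 0 ≤ 1 - x := sub_nonneg.mpr hx₁
  positivity

theorem sum_eval (n : ℕ) (x : ℝ) :
    ∑ k ∈ range (n + 1), (bernsteinPolynomial ℝ n k).eval x = 1 := by
  simpa [eval_finsetSum] using congrArg (eval x) (bernsteinPolynomial.sum ℝ n)

theorem sum_eval_mul_sq_sub (n : ℕ) (x : ℝ) :
    ∑ k ∈ range (n + 1), (bernsteinPolynomial ℝ n k).eval x * (n * x - k) ^ 2 =
      n * x * (1 - x) := by
  have := congrArg (eval x) (bernsteinPolynomial.variance ℝ n)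
  simp only [eval_finsetSum, eval_mul, eval_pow, eval_sub, eval_X, eval_natCast,
    eval_one, nsmul_eq_mul] at this
  rw [← this]
  exact sum_congr rfl fun k _ => mul_comm _ _

theorem sum_eval_mul_abs_sub_le (n : ℕ) {x : ℝ} (hx₀ : 0 ≤ x) (hx₁ : x ≤ 1) :
    ∑ k ∈ range (n + 1), (bernsteinPolynomial ℝ n k).eval x * |n * x - k| ≤
      √(n * x * (1 - x)) := by
  rw [← sum_eval_mul_sq_sub]
  exact sum_mul_abs_le_sqrt_sum_mul_sq _ _ (fun k _ => eval_nonneg n k hx₀ hx₁) (sum_eval n x)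

end bernsteinPolynomial

theorem one_sub_abs_div_le_one_add_div {t a c : ℝ} (hc : 0 < c) (hca : c ≤ a) :
    1 - |t| / c ≤ 1 + t / a := by
  have hdiv : |t| / a ≤ |t| / c := div_le_div_of_nonneg_left (abs_nonneg t) hc hca
  have hneg : -|t| / a ≤ t / a := div_le_div_of_nonneg_right (neg_abs_le t) (hc.le.trans hca)
  rw [neg_div] at hneg
  linarith

theorem one_sub_abs_sub_div_le_min {m n k c : ℝ} (hc : 0 < c) (hcm : c ≤ m) (hcn : c ≤ n - m) :
    1 - |m - k| / c ≤ min (k / m) ((n - k) / (n - m)) := by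
  have hm : m ≠ 0 := (hc.trans_le hcm).ne'
  have hnm : n - m ≠ 0 := (hc.trans_le hcn).ne'
  refine le_min ?_ ?_
  · rw [abs_sub_comm]
    refine (one_sub_abs_div_le_one_add_div hc hcm).trans_eq ?_
    field_simp
    ring
  · refine (one_sub_abs_div_le_one_add_div hc hcn).trans_eq ?_
    field_simp
    ring

/-- For `S ~ Binomial(n, m/n)` with `0 < m < n`,
`E[min(S/m, (n−S)/(n−m))] ≥ 1 − √(m(n−m)) / (√n · min(m, n−m))`,
the expectation written as an explicit finite sum over the binomial distribution. -/
theorem binomial_min_expectation_bound (m n : ℕ) (hm : 0 < m) (hmn : m < n) :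
    1 - Real.sqrt ((m : ℝ) * ((n : ℝ) - m)) / (Real.sqrt n * min (m : ℝ) ((n : ℝ) - m)) ≤
      ∑ k ∈ Finset.range (n + 1),
        (n.choose k : ℝ) * ((m : ℝ) / n) ^ k * (1 - (m : ℝ) / n) ^ (n - k) *
          min ((k : ℝ) / m) (((n : ℝ) - k) / ((n : ℝ) - m)) := by
  have hmn' : (m : ℝ) < n := by exact_mod_cast hmn
  have hn : (0 : ℝ) < n := by exact_mod_cast hm.trans hmn
  set x : ℝ := m / n
  set c : ℝ := min (m : ℝ) (n - m)
  have hc : 0 < c := lt_min (by exact_mod_cast hm) (by linarith)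
  have hnx : n * x = m := mul_div_cancel₀ _ hn.ne'
  have hsd : √(m * (1 - x)) = √(m * (n - m)) / √n := by
    rw [← Real.sqrt_div' _ hn.le]
    congr 1
    field_simp
    rw [sub_mul, one_mul, mul_comm, hnx]
  have hx₀ : 0 ≤ x := by positivity
  have hx₁ : x ≤ 1 := (div_le_one hn).mpr hmn'.le
  have hdev := bernsteinPolynomial.sum_eval_mul_abs_sub_le n hx₀ hx₁
  rw [hnx, hsd] at hdev
  calc 1 - √(m * (n - m)) / (√n * c)
      ≤ 1 - (∑ k ∈ range (n + 1), (bernsteinPolynomial ℝ n k).eval x * |(m : ℝ) - k|) / c := by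
        rw [← div_div]; gcongr
    _ = ∑ k ∈ range (n + 1), (bernsteinPolynomial ℝ n k).eval x * (1 - |(m : ℝ) - k| / c) := by
        simp only [mul_sub, mul_one, sum_sub_distrib, bernsteinPolynomial.sum_eval, sum_div,
          mul_div_assoc]
    _ ≤ _ := by
        refine sum_le_sum fun k _ => ?_
        rw [← bernsteinPolynomial.eval_eq]
        exact mul_le_mul_of_nonneg_left
          (one_sub_abs_sub_div_le_min hc (min_le_left _ _) (min_le_right _ _))
          (bernsteinPolynomial.eval_nonneg n k hx₀ hx₁)
end

section
/- Let 0 < m < n be integers, let Z_1, ..., Z_n be i.i.d. with P(Z_i = 1) = m/n and P(Z_i = 0) = 1 − m/n, and let ψ_1, ..., ψ_n be real numbers with arithmetic mean ψ̄. Set γ_{m,n}² := (m(n−m))/(n(n−1)) · Σ_{i=1}^n (ψ_i − ψ̄)² and assume γ_{m,n} ≠ 0. Set R(ψ,m,n) := (max_i |ψ_i − ψ̄| / (3 γ_{m,n})) · max(m/n, 1 − m/n). Then for every η ≥ 0, P( |γ_{m,n}^{-1} Σ_{i=1}^n ψ_i (Z_i − m/n)| > δ(m,n) η | Σ_{i=1}^n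 Z_i = m ) ≤ 2 exp( − (η²/2) / (1 + η · R(ψ,m,n)) ). -/
open MeasureTheory ProbabilityTheory

/-- `δ(m,n) := (E min(S/m, (n−S)/(n−m)))⁻¹` where `S ~ Binomial(n, m/n)`,
written as an explicit finite sum over the binomial distribution. -/
noncomputable def deltaMN (m n : ℕ) : ℝ :=
  (∑ k ∈ Finset.range (n + 1),
      (n.choose k : ℝ) * ((m : ℝ) / n) ^ k * (1 - (m : ℝ) / n) ^ (n - k) *
        min ((k : ℝ) / m) (((n : ℝ) - k) / ((n : ℝ) - m)))⁻¹

/-!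
Conditionally on `∑ Zᵢ = m`, the set `{i | Zᵢ = 1}` is a uniform `m`-subset `A`, so the probability
is a proportion of `m`-subsets; with `aᵢ = ψᵢ - ψ̄` the statistic is `γ⁻¹ ∑_{i ∈ A} aᵢ`.
Couple `A` with a Bernoulli(`m/n`) random set `K`: draw `S ~ Bin(n, m/n)` and let `K` be a uniform
`S`-subset of `A` if `S ≤ m`, a uniform `S`-superset of `A` if `S ≥ m`. Since `∑ aᵢ = 0`,
`E[∑_{i ∈ K} aᵢ | A] = E[min (S/m) ((n - S)/(n - m))] ∑_{i ∈ A} aᵢ = δ(m,n)⁻¹ ∑_{i ∈ A} aᵢ`, so by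
Jensen the exponential moments of `δ⁻¹ ∑_{i ∈ A} aᵢ` are dominated by those of the independent
sum `∑_{i ∈ K} aᵢ`, to which Bernstein's bound `eᵗ ≤ 1 + t + t²/2 · (1 - |t|/3)⁻¹` applies.
A Chernoff bound at `u = η / ((1 + ηR) γ)` for each of the two tails finishes.
-/

open Finset
open scoped ENNReal

section Slices

variable {α : Type*} [DecidableEq α]

theorem Finset.card_mul_sum_powersetCard_sum {R : Type*} [CommSemiring R] (s : Finset α)
    (k : ℕ) (a : α → R) :
    (#s : R) * ∑ K ∈ s.powersetCard k, ∑ i ∈ K, a i = k * (#s).choose k * ∑ i ∈ s, a i := by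
  rcases k with _ | k
  · simp
  have hcount : ∀ i ∈ s, #{K ∈ s.powersetCard (k + 1) | i ∈ K} = (#s - 1).choose k := by
    intro i hi
    simpa using card_filter_powersetCard_subset {i} s (k + 1) (by simpa) (by simp)
  have hswap : ∑ K ∈ s.powersetCard (k + 1), ∑ i ∈ K, a i
      = ∑ i ∈ s, ∑ K ∈ s.powersetCard (k + 1) with i ∈ K, a i :=
    sum_comm' fun K i => by simp only [mem_filter, mem_powersetCard]; grind
  rw [hswap, mul_sum, mul_sum]
  refine sum_congr rfl fun i hi => ?_
  obtain ⟨r, hr⟩ : ∃ r, #s = r + 1 := Nat.exists_eq_add_one.2 (card_pos.2 ⟨i, hi⟩)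
  rw [sum_const, hcount i hi, nsmul_eq_mul, hr, Nat.add_sub_cancel, ← mul_assoc]
  congr 1
  exact_mod_cast congrArg (Nat.cast : ℕ → R)
    ((Nat.add_one_mul_choose_eq r k).trans (Nat.mul_comm _ _))

theorem Finset.sum_powersetCard_sum_powersetCard {β : Type*} [AddCommMonoid β] (t : Finset α)
    {k m : ℕ} (hkm : k ≤ m) (f : Finset α → β) :
    ∑ A ∈ t.powersetCard m, ∑ K ∈ A.powersetCard k, f K
      = (#t - k).choose (m - k) • ∑ K ∈ t.powersetCard k, f K := by
  rw [sum_comm' (t' := t.powersetCard k) (s' := fun K => {A ∈ t.powersetCard m | K ⊆ A})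
    fun A K => by simp only [mem_filter, mem_powersetCard]; grind, smul_sum]
  refine sum_congr rfl fun K hK => ?_
  rw [mem_powersetCard] at hK
  rw [sum_const, card_filter_powersetCard_subset K t m hK.1 (hK.2 ▸ hkm), hK.2]

theorem Finset.sum_powersetCard_compl [Fintype α] {β : Type*} [AddCommMonoid β] {m : ℕ}
    (hm : m ≤ Fintype.card α) (f : Finset α → β) :
    ∑ A ∈ powersetCard m univ, f Aᶜ = ∑ B ∈ powersetCard (Fintype.card α - m) univ, f B := by
  refine sum_nbij' compl compl (fun A hA => ?_) (fun B hB => ?_) (fun A _ => compl_compl A)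
    (fun B _ => compl_compl B) fun A _ => rfl
  · simp_all [card_compl]
  · simp_all [card_compl]
    omega

theorem ConvexOn.choose_mul_map_le_sum_powersetCard {f : ℝ → ℝ} (hf : ConvexOn ℝ Set.univ f)
    (a : α → ℝ) {s : Finset α} {k : ℕ} (hk : k ≤ #s) :
    (#s).choose k * f (k / #s * ∑ i ∈ s, a i) ≤ ∑ K ∈ s.powersetCard k, f (∑ i ∈ K, a i) := by
  rcases s.eq_empty_or_nonempty with rfl | hs
  · simp_all
  have hC : (0 : ℝ) < (#s).choose k := by exact_mod_cast Nat.choose_pos hk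
  have hmean : ∑ K ∈ s.powersetCard k, ((#s).choose k : ℝ)⁻¹ • ∑ i ∈ K, a i
      = k / #s * ∑ i ∈ s, a i := by
    have hs0 : (#s : ℝ) ≠ 0 := by exact_mod_cast hs.card_pos.ne'
    rw [← smul_sum, smul_eq_mul]
    field_simp
    linear_combination card_mul_sum_powersetCard_sum s k a
  have hjensen := hf.map_sum_le (t := s.powersetCard k) (w := fun _ => ((#s).choose k : ℝ)⁻¹)
    (p := fun K => ∑ i ∈ K, a i) (fun _ _ => by positivity)
    (by rw [sum_const, card_powersetCard, nsmul_eq_mul, mul_inv_cancel₀ hC.ne'])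
    (fun _ _ => Set.mem_univ _)
  rw [hmean, ← smul_sum, smul_eq_mul] at hjensen
  rwa [le_inv_mul_iff₀ hC] at hjensen

theorem ConvexOn.choose_mul_sum_powersetCard_le {f : ℝ → ℝ} (hf : ConvexOn ℝ Set.univ f)
    (a : α → ℝ) (t : Finset α) {k m : ℕ} (hkm : k ≤ m) :
    (#t).choose k * ∑ A ∈ t.powersetCard m, f (k / m * ∑ i ∈ A, a i)
      ≤ (#t).choose m * ∑ K ∈ t.powersetCard k, f (∑ i ∈ K, a i) := by
  have hC : (0 : ℝ) < m.choose k := by exact_mod_cast Nat.choose_pos hkm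
  have hsubsets : ∑ A ∈ t.powersetCard m, (m.choose k : ℝ) * f (k / m * ∑ i ∈ A, a i)
      ≤ (#t - k).choose (m - k) * ∑ K ∈ t.powersetCard k, f (∑ i ∈ K, a i) := by
    rw [← nsmul_eq_mul, ← sum_powersetCard_sum_powersetCard t hkm]
    refine sum_le_sum fun A hA => ?_
    obtain ⟨-, hAm⟩ := mem_powersetCard.1 hA
    have := hf.choose_mul_map_le_sum_powersetCard a (hAm ▸ hkm)
    rwa [hAm] at this
  have hchoose : ((#t).choose k : ℝ) * (#t - k).choose (m - k) = (#t).choose m * m.choose k := by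
    exact_mod_cast (Nat.choose_mul hkm).symm
  refine le_of_mul_le_mul_left ?_ hC
  calc (m.choose k : ℝ) * ((#t).choose k * ∑ A ∈ t.powersetCard m, f (k / m * ∑ i ∈ A, a i))
      = (#t).choose k * ∑ A ∈ t.powersetCard m, (m.choose k : ℝ) * f (k / m * ∑ i ∈ A, a i) := by
        rw [mul_sum, mul_sum, mul_sum]
        exact sum_congr rfl fun _ _ => by ring
    _ ≤ (#t).choose k * ((#t - k).choose (m - k) * ∑ K ∈ t.powersetCard k, f (∑ i ∈ K, a i)) :=
        mul_le_mul_of_nonneg_left hsubsets (by positivity)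
    _ = m.choose k * ((#t).choose m * ∑ K ∈ t.powersetCard k, f (∑ i ∈ K, a i)) := by
        rw [← mul_assoc, hchoose]; ring

theorem ConvexOn.choose_mul_sum_powersetCard_min_le [Fintype α] {f : ℝ → ℝ}
    (hf : ConvexOn ℝ Set.univ f) {a : α → ℝ} (ha : ∑ i, a i = 0) {k m : ℕ} (hm : 0 < m)
    (hmn : m < Fintype.card α) (hk : k ≤ Fintype.card α) :
    (Fintype.card α).choose k * ∑ A ∈ powersetCard m univ,
        f (min ((k : ℝ) / m) ((Fintype.card α - k) / (Fintype.card α - m)) * ∑ i ∈ A, a i)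
      ≤ (Fintype.card α).choose m * ∑ K ∈ powersetCard k univ, f (∑ i ∈ K, a i) := by
  set n := Fintype.card α
  have hnm : (0 : ℝ) < n - m := by rw [sub_pos]; exact_mod_cast hmn
  rcases le_or_gt k m with hkm | hmk
  · have hmin : min ((k : ℝ) / m) ((n - k) / (n - m)) = k / m := by
      refine min_eq_left ?_
      rw [div_le_div_iff₀ (by exact_mod_cast hm) hnm]
      have : (k : ℝ) ≤ m := by exact_mod_cast hkm
      nlinarith
    simpa [hmin] using hf.choose_mul_sum_powersetCard_le a univ hkm
  · have hmin : min ((k : ℝ) / m) ((n - k) / (n - m)) = (n - k : ℕ) / (n - m : ℕ) := by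
      rw [min_eq_right, Nat.cast_sub hk, Nat.cast_sub hmn.le]
      rw [div_le_div_iff₀ hnm (by exact_mod_cast hm)]
      have : (m : ℝ) ≤ k := by exact_mod_cast hmk.le
      nlinarith
    -- `A ⊆ K ↔ Kᶜ ⊆ Aᶜ` and `∑ i ∈ A, a i = -∑ i ∈ Aᶜ, a i`: this is the first case for the
    -- complements, with `n - k ≤ n - m`.
    have hcompl : ∀ A : Finset α, ∑ i ∈ A, a i = -∑ i ∈ Aᶜ, a i := fun A =>
      eq_neg_of_add_eq_zero_left ((sum_add_sum_compl A a).trans ha)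
    have hfneg : ConvexOn ℝ Set.univ (fun x => f (-x)) := hf.comp_linearMap (-LinearMap.id)
    have := hfneg.choose_mul_sum_powersetCard_le a univ (Nat.sub_le_sub_left hmk.le n)
    rw [card_univ, ← sum_powersetCard_compl hmn.le, ← sum_powersetCard_compl hk,
      Nat.choose_symm hk, Nat.choose_symm hmn.le] at this
    have hflip : ∀ (c : ℝ) (A : Finset α), f (-(c * ∑ i ∈ Aᶜ, a i)) = f (c * ∑ i ∈ A, a i) := by
      intro c A
      rw [hcompl A, mul_neg]
    have hflip₁ : ∀ A : Finset α, f (-∑ i ∈ Aᶜ, a i) = f (∑ i ∈ A, a i) := fun A => by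
      rw [hcompl A]
    simpa only [hmin, hflip, hflip₁] using this

theorem ConvexOn.sum_powersetCard_le_choose_mul_sum_bernoulli [Fintype α] {f : ℝ → ℝ}
    (hf : ConvexOn ℝ Set.univ f) {a : α → ℝ} (ha : ∑ i, a i = 0) {m : ℕ} (hm : 0 < m)
    (hmn : m < Fintype.card α) {p : ℝ} (hp0 : 0 ≤ p) (hp1 : p ≤ 1) :
    ∑ A ∈ powersetCard m univ, f ((∑ k ∈ range (Fintype.card α + 1),
        (Fintype.card α).choose k * p ^ k * (1 - p) ^ (Fintype.card α - k) *
          min ((k : ℝ) / m) ((Fintype.card α - k) / (Fintype.card α - m))) * ∑ i ∈ A, a i)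
      ≤ (Fintype.card α).choose m *
          ∑ K : Finset α, p ^ #K * (1 - p) ^ (Fintype.card α - #K) * f (∑ i ∈ K, a i) := by
  set n := Fintype.card α
  set b : ℕ → ℝ := fun k => p ^ k * (1 - p) ^ (n - k)
  set ℓ : ℕ → ℝ := fun k => min ((k : ℝ) / m) ((n - k) / (n - m))
  have hb0 : ∀ k, 0 ≤ b k := fun k => by
    have : 0 ≤ 1 - p := by linarith
    positivity
  have hb1 : ∑ k ∈ range (n + 1), n.choose k * b k = 1 := by
    simpa [b, mul_comm, mul_left_comm] using (add_pow p (1 - p) n).symm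
  have hjensen : ∀ A : Finset α, f ((∑ k ∈ range (n + 1), n.choose k * b k * ℓ k) * ∑ i ∈ A, a i)
      ≤ ∑ k ∈ range (n + 1), n.choose k * b k * f (ℓ k * ∑ i ∈ A, a i) := by
    intro A
    have := hf.map_sum_le (t := range (n + 1)) (w := fun k => n.choose k * b k)
      (p := fun k => ℓ k * ∑ i ∈ A, a i) (fun k _ => mul_nonneg (by positivity) (hb0 k)) hb1
      (fun _ _ => Set.mem_univ _)
    simpa only [smul_eq_mul, sum_mul, mul_assoc] using this
  calc _ = ∑ A ∈ powersetCard m univ,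
        f ((∑ k ∈ range (n + 1), n.choose k * b k * ℓ k) * ∑ i ∈ A, a i) := by
        simp only [b, ℓ, mul_assoc]
    _ ≤ ∑ A ∈ powersetCard m univ,
        ∑ k ∈ range (n + 1), n.choose k * b k * f (ℓ k * ∑ i ∈ A, a i) :=
        sum_le_sum fun A _ => hjensen A
    _ = ∑ k ∈ range (n + 1), b k *
          (n.choose k * ∑ A ∈ powersetCard m univ, f (ℓ k * ∑ i ∈ A, a i)) := by
        rw [sum_comm]
        refine sum_congr rfl fun k _ => ?_
        rw [mul_sum, mul_sum]
        exact sum_congr rfl fun _ _ => by ring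
    _ ≤ ∑ k ∈ range (n + 1), b k *
          (n.choose m * ∑ K ∈ powersetCard k univ, f (∑ i ∈ K, a i)) :=
        sum_le_sum fun k hk => mul_le_mul_of_nonneg_left
          (hf.choose_mul_sum_powersetCard_min_le ha hm hmn (Nat.lt_succ_iff.1 (mem_range.1 hk)))
          (hb0 k)
    _ = n.choose m * ∑ K : Finset α, b #K * f (∑ i ∈ K, a i) := by
        rw [← powerset_univ, sum_powerset, card_univ, mul_sum]
        refine sum_congr rfl fun k _ => ?_
        rw [mul_sum, mul_sum, mul_sum]
        refine sum_congr rfl fun K hK => ?_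
        rw [(mem_powersetCard.1 hK).2]
        ring

end Slices

open scoped Nat in
theorem Nat.two_mul_three_pow_le_factorial_add_two (k : ℕ) : 2 * 3 ^ k ≤ (k + 2)! := by
  induction k with
  | zero => simp [Nat.factorial]
  | succ k ih =>
    rw [Nat.factorial_succ, pow_succ]
    nlinarith

open scoped Nat in
theorem Real.exp_le_one_add_add_sq_div_two_mul_inv {t c : ℝ} (hc : c < 1) (ht : |t| ≤ 3 * c) :
    Real.exp t ≤ 1 + t + t ^ 2 / 2 * (1 - c)⁻¹ := by
  set r := |t| / 3 with hr
  have hr0 : 0 ≤ r := by positivity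
  have hrc : r ≤ c := by rw [hr]; linarith
  have hr1 : r < 1 := hrc.trans_lt hc
  have hsum : Summable fun k : ℕ => t ^ k / k ! := Real.summable_pow_div_factorial t
  have hterm : ∀ k : ℕ, t ^ (k + 2) / (k + 2)! ≤ t ^ 2 / 2 * r ^ k := fun k => by
    have hfact : (2 * 3 ^ k : ℝ) ≤ (k + 2)! := by
      exact_mod_cast Nat.two_mul_three_pow_le_factorial_add_two k
    calc t ^ (k + 2) / (k + 2)! ≤ |t| ^ (k + 2) / (k + 2)! := by
          gcongr ?_ / _
          exact (le_abs_self _).trans (abs_pow t _).le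
      _ ≤ |t| ^ (k + 2) / (2 * 3 ^ k) := by gcongr
      _ = t ^ 2 / 2 * r ^ k := by rw [div_pow, pow_add, sq_abs]; field_simp
  have htail : ∑' k : ℕ, t ^ (k + 2) / (k + 2)! ≤ t ^ 2 / 2 * (1 - r)⁻¹ := by
    rw [← tsum_geometric_of_lt_one hr0 hr1, ← tsum_mul_left]
    exact ((summable_nat_add_iff 2).2 hsum).tsum_le_tsum hterm
      ((summable_geometric_of_lt_one hr0 hr1).mul_left _)
  have hexp : Real.exp t = 1 + t + ∑' k : ℕ, t ^ (k + 2) / (k + 2)! := by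
    rw [Real.exp_eq_exp_ℝ, NormedSpace.exp_eq_tsum_div]
    beta_reduce
    rw [hsum.tsum_eq_zero_add,
      ((summable_nat_add_iff 1).2 hsum).tsum_eq_zero_add]
    norm_num [Nat.factorial]
    ring
  have hinv : (1 - r)⁻¹ ≤ (1 - c)⁻¹ := inv_anti₀ (by linarith) (by linarith)
  rw [hexp]
  nlinarith [sq_nonneg t]

theorem Real.mul_exp_add_one_sub_le {p c x : ℝ} (hp0 : 0 ≤ p) (hp1 : p ≤ 1) (hc : c < 1)
    (hx : |x| * max p (1 - p) ≤ 3 * c) :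
    p * Real.exp x + (1 - p) ≤ Real.exp (p * x + p * (1 - p) * x ^ 2 / 2 * (1 - c)⁻¹) := by
  set q := 1 - p with hq
  have hq0 : 0 ≤ q := by linarith
  have hlo := Real.exp_le_one_add_add_sq_div_two_mul_inv hc (t := -(p * x)) (by
    rw [abs_neg, abs_mul, abs_of_nonneg hp0]; nlinarith [le_max_left p q, abs_nonneg x])
  have hhi := Real.exp_le_one_add_add_sq_div_two_mul_inv hc (t := q * x) (by
    rw [abs_mul, abs_of_nonneg hq0]; nlinarith [le_max_right p q, abs_nonneg x])
  have hcentre : p * Real.exp x + q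
      = Real.exp (p * x) * (q * Real.exp (-(p * x)) + p * Real.exp (q * x)) := by
    rw [mul_add, mul_left_comm, ← Real.exp_add, mul_left_comm, ← Real.exp_add, add_neg_cancel,
      Real.exp_zero, hq]
    ring_nf
  rw [hcentre, Real.exp_add]
  gcongr
  calc q * Real.exp (-(p * x)) + p * Real.exp (q * x)
      ≤ q * (1 + -(p * x) + (-(p * x)) ^ 2 / 2 * (1 - c)⁻¹)
        + p * (1 + q * x + (q * x) ^ 2 / 2 * (1 - c)⁻¹) := by gcongr
    _ = 1 + p * q * x ^ 2 / 2 * (1 - c)⁻¹ := by rw [hq]; ring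
    _ ≤ _ := by linarith [Real.add_one_le_exp (p * q * x ^ 2 / 2 * (1 - c)⁻¹)]

theorem Finset.prod_mul_add_one_sub_eq_sum {ι R : Type*} [Fintype ι] [DecidableEq ι]
    [CommRing R] (p : R) (x : ι → R) :
    ∏ i, (p * x i + (1 - p))
      = ∑ K : Finset ι, p ^ #K * (1 - p) ^ (Fintype.card ι - #K) * ∏ i ∈ K, x i := by
  rw [prod_add, ← powerset_univ]
  refine sum_congr rfl fun K _ => ?_
  rw [prod_mul_distrib, prod_const, prod_const, ← compl_eq_univ_sdiff, card_compl]
  ring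

theorem Real.prod_mul_exp_add_one_sub_le {ι : Type*} [Fintype ι] {a : ι → ℝ} (ha : ∑ i, a i = 0)
    {M p c u : ℝ} (haM : ∀ i, |a i| ≤ M) (hp0 : 0 ≤ p) (hp1 : p ≤ 1) (hc : c < 1) (hu : 0 ≤ u)
    (huM : u * M * max p (1 - p) ≤ 3 * c) :
    ∏ i, (p * Real.exp (u * a i) + (1 - p))
      ≤ Real.exp (p * (1 - p) * u ^ 2 * (∑ i, a i ^ 2) / 2 * (1 - c)⁻¹) := by
  have hfactor : ∀ i, p * Real.exp (u * a i) + (1 - p)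
      ≤ Real.exp (p * (u * a i) + p * (1 - p) * (u * a i) ^ 2 / 2 * (1 - c)⁻¹) := fun i =>
    Real.mul_exp_add_one_sub_le hp0 hp1 hc <| by
      rw [abs_mul, abs_of_nonneg hu]
      exact le_trans (by gcongr; exact haM i) huM
  calc ∏ i, (p * Real.exp (u * a i) + (1 - p))
      ≤ ∏ i, Real.exp (p * (u * a i) + p * (1 - p) * (u * a i) ^ 2 / 2 * (1 - c)⁻¹) :=
        prod_le_prod (fun i _ => by nlinarith [Real.exp_pos (u * a i)]) fun i _ => hfactor i
    _ = _ := by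
        rw [← Real.exp_sum, sum_add_distrib, ← mul_sum, ← mul_sum, ha, mul_zero, mul_zero,
          zero_add, mul_sum, sum_div, sum_mul]
        exact congrArg Real.exp (sum_congr rfl fun i _ => by ring)

theorem Finset.card_filter_lt_mul_exp_le_sum_exp {ι : Type*} (s : Finset ι) (f : ι → ℝ)
    {t u : ℝ} (hu : 0 ≤ u) :
    #{i ∈ s | t < f i} * Real.exp (u * t) ≤ ∑ i ∈ s, Real.exp (u * f i) := by
  rw [← nsmul_eq_mul, ← sum_const]
  calc ∑ _ ∈ s with t < f _, Real.exp (u * t) ≤ ∑ i ∈ s with t < f i, Real.exp (u * f i) :=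
        sum_le_sum fun i hi => Real.exp_le_exp.2 <|
          mul_le_mul_of_nonneg_left (mem_filter.1 hi).2.le hu
    _ ≤ ∑ i ∈ s, Real.exp (u * f i) :=
        sum_le_sum_of_subset_of_nonneg (filter_subset _ _) fun i _ _ => (Real.exp_pos _).le

theorem deltaMN_pos {m n : ℕ} (hm : 0 < m) (hmn : m < n) : 0 < deltaMN m n := by
  have hm' : (0 : ℝ) < m := by exact_mod_cast hm
  have hmn' : (m : ℝ) < n := by exact_mod_cast hmn
  have hp1 : (m : ℝ) / n < 1 := (div_lt_one (by linarith)).2 hmn'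
  have hnm : (0 : ℝ) < n - m := by rw [sub_pos]; exact_mod_cast hmn
  refine inv_pos.2 (sum_pos' (fun k hk => ?_) ⟨m, mem_range.2 (by omega), ?_⟩)
  · have hkn : (k : ℝ) ≤ n := by exact_mod_cast Nat.lt_succ_iff.1 (mem_range.1 hk)
    have : 0 ≤ min ((k : ℝ) / m) ((n - k) / (n - m)) :=
      le_min (by positivity) (div_nonneg (by linarith) hnm.le)
    have : (0 : ℝ) ≤ 1 - m / n := by linarith
    positivity
  · rw [div_self hm'.ne', div_self hnm.ne', min_self, mul_one]
    have : (0 : ℝ) < 1 - m / n := by linarith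
    have : (0 : ℝ) < n.choose m := by exact_mod_cast Nat.choose_pos hmn.le
    have : (0 : ℝ) < m / n := div_pos hm' (by linarith)
    positivity

section Tails

variable {α : Type*} [Fintype α] [DecidableEq α]

theorem sum_powersetCard_exp_mul_le {a : α → ℝ} (ha : ∑ i, a i = 0) {M : ℝ} (haM : ∀ i, |a i| ≤ M)
    {m : ℕ} (hm : 0 < m) (hmn : m < Fintype.card α) {c u : ℝ} (hc : c < 1) (hu : 0 ≤ u)
    (huM : u * M * max ((m : ℝ) / Fintype.card α) (1 - m / Fintype.card α) ≤ 3 * c) :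
    ∑ A ∈ powersetCard m univ, Real.exp (u * ((deltaMN m (Fintype.card α))⁻¹ * ∑ i ∈ A, a i))
      ≤ (Fintype.card α).choose m * Real.exp ((m : ℝ) / Fintype.card α *
          (1 - m / Fintype.card α) * u ^ 2 * (∑ i, a i ^ 2) / 2 * (1 - c)⁻¹) := by
  set n := Fintype.card α
  set p : ℝ := m / n
  have hp0 : 0 ≤ p := by positivity
  have hp1 : p ≤ 1 := div_le_one_of_le₀ (by exact_mod_cast hmn.le) (by positivity)
  have hconv : ConvexOn ℝ Set.univ fun x => Real.exp (u * x) :=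
    convexOn_exp.comp_linearMap (LinearMap.mulLeft ℝ u)
  calc _ ≤ n.choose m * ∑ K : Finset α,
        p ^ #K * (1 - p) ^ (n - #K) * Real.exp (u * ∑ i ∈ K, a i) := by
        simpa only [deltaMN, inv_inv] using
          hconv.sum_powersetCard_le_choose_mul_sum_bernoulli ha hm hmn hp0 hp1
    _ = n.choose m * ∏ i, (p * Real.exp (u * a i) + (1 - p)) := by
        simp only [prod_mul_add_one_sub_eq_sum, mul_sum, ← Real.exp_sum]
        rfl
    _ ≤ _ := mul_le_mul_of_nonneg_left
        (Real.prod_mul_exp_add_one_sub_le ha haM hp0 hp1 hc hu huM) (by positivity)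

theorem card_filter_lt_sum_le {a : α → ℝ} (ha : ∑ i, a i = 0) {M : ℝ} (haM : ∀ i, |a i| ≤ M)
    {m : ℕ} (hm : 0 < m) (hmn : m < Fintype.card α) {γ R η : ℝ} (hγ : 0 < γ)
    (hvar : (m : ℝ) / Fintype.card α * (1 - m / Fintype.card α) * ∑ i, a i ^ 2 ≤ γ ^ 2)
    (hR : M * max ((m : ℝ) / Fintype.card α) (1 - m / Fintype.card α) ≤ 3 * γ * R)
    (hη : 0 ≤ η) :
    (#{A ∈ powersetCard m univ | γ * deltaMN m (Fintype.card α) * η < ∑ i ∈ A, a i} : ℝ)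
      ≤ Real.exp (-(η ^ 2 / 2) / (1 + η * R)) * (Fintype.card α).choose m := by
  set n := Fintype.card α
  set p : ℝ := m / n
  set δ := deltaMN m n
  have hδ : 0 < δ := deltaMN_pos hm hmn
  have hR0 : 0 ≤ R := by
    obtain ⟨i⟩ := Fintype.card_pos_iff.1 (hm.trans hmn)
    have hM : 0 ≤ M := (abs_nonneg _).trans (haM i)
    have : 0 ≤ M * max p (1 - p) := mul_nonneg hM (le_max_of_le_left (by positivity))
    nlinarith
  set D := 1 + η * R with hD_def
  have hD : 0 < D := by positivity
  set u := η / (D * γ) with hu_def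
  have hu : 0 ≤ u := by positivity
  have hc : η * R / D < 1 := (div_lt_one hD).2 (by linarith)
  have huM : u * M * max p (1 - p) ≤ 3 * (η * R / D) := calc
    u * M * max p (1 - p) ≤ u * (3 * γ * R) := by rw [mul_assoc]; gcongr
    _ = 3 * (η * R / D) := by rw [hu_def]; field_simp
  have hexponent : p * (1 - p) * u ^ 2 * (∑ i, a i ^ 2) / 2 * (1 - η * R / D)⁻¹
      ≤ η ^ 2 / D / 2 := by
    have h1D : (1 - η * R / D)⁻¹ = D := by rw [hD_def]; field_simp; ring
    calc p * (1 - p) * u ^ 2 * (∑ i, a i ^ 2) / 2 * (1 - η * R / D)⁻¹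
        = u ^ 2 * (p * (1 - p) * ∑ i, a i ^ 2) * D / 2 := by rw [h1D]; ring
      _ ≤ u ^ 2 * γ ^ 2 * D / 2 := by gcongr
      _ = η ^ 2 / D / 2 := by rw [hu_def]; field_simp
  have hmarkov := card_filter_lt_mul_exp_le_sum_exp (powersetCard m univ) (fun A => ∑ i ∈ A, a i)
    (t := γ * δ * η) (by positivity : 0 ≤ u * δ⁻¹)
  have hmgf := sum_powersetCard_exp_mul_le ha haM hm hmn hc hu huM
  have hshift : Real.exp (-(η ^ 2 / 2) / D) * Real.exp (u * δ⁻¹ * (γ * δ * η))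
      = Real.exp (η ^ 2 / D / 2) := by
    rw [← Real.exp_add, hu_def]; congr 1; field_simp; ring
  refine le_of_mul_le_mul_right ?_ (Real.exp_pos (u * δ⁻¹ * (γ * δ * η)))
  calc _ ≤ ∑ A ∈ powersetCard m univ, Real.exp (u * (δ⁻¹ * ∑ i ∈ A, a i)) := by
        simpa only [mul_assoc] using hmarkov
    _ ≤ n.choose m * Real.exp (η ^ 2 / D / 2) :=
        hmgf.trans (mul_le_mul_of_nonneg_left (Real.exp_le_exp.2 hexponent) (by positivity))
    _ = _ := by rw [← hshift]; ring

theorem card_filter_lt_abs_sum_le {a : α → ℝ} (ha : ∑ i, a i = 0) {M : ℝ} (haM : ∀ i, |a i| ≤ M)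
    {m : ℕ} (hm : 0 < m) (hmn : m < Fintype.card α) {γ R η : ℝ} (hγ : 0 < γ)
    (hvar : (m : ℝ) / Fintype.card α * (1 - m / Fintype.card α) * ∑ i, a i ^ 2 ≤ γ ^ 2)
    (hR : M * max ((m : ℝ) / Fintype.card α) (1 - m / Fintype.card α) ≤ 3 * γ * R)
    (hη : 0 ≤ η) :
    (#{A ∈ powersetCard m univ | γ * deltaMN m (Fintype.card α) * η < |∑ i ∈ A, a i|} : ℝ)
      ≤ 2 * Real.exp (-(η ^ 2 / 2) / (1 + η * R)) * (Fintype.card α).choose m := by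
  have hupper := card_filter_lt_sum_le ha haM hm hmn hγ hvar hR hη
  have hlower := card_filter_lt_sum_le (a := -a) (by simp [ha])
    (by simpa using haM) hm hmn hγ (by simpa using hvar) hR hη
  simp only [Pi.neg_apply, sum_neg_distrib] at hlower
  set T := γ * deltaMN m (Fintype.card α) * η
  have hsplit : {A ∈ powersetCard m (univ : Finset α) | T < |∑ i ∈ A, a i|}
      ⊆ {A ∈ powersetCard m (univ : Finset α) | T < ∑ i ∈ A, a i}
        ∪ {A ∈ powersetCard m (univ : Finset α) | T < -∑ i ∈ A, a i} := by
    intro A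
    simp only [mem_union, mem_filter, lt_abs]
    tauto
  calc _ ≤ (#{A ∈ powersetCard m univ | T < ∑ i ∈ A, a i}
        + #{A ∈ powersetCard m univ | T < -∑ i ∈ A, a i} : ℝ) := by
        exact_mod_cast (card_le_card hsplit).trans (card_union_le _ _)
    _ ≤ _ := by linarith

end Tails

section BernoulliVector

variable {α Ω : Type*} [Fintype α] [DecidableEq α] [MeasurableSpace Ω] {μ : Measure Ω}
  [IsProbabilityMeasure μ] {Z : α → Ω → ℝ} {p : ℝ}

open scoped Classical in
theorem ProbabilityTheory.iIndepFun.measure_setOf_eq_sum (hZ : ∀ i, Measurable (Z i))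
    (hindep : iIndepFun Z μ) (hp0 : 0 ≤ p) (hp1 : p ≤ 1)
    (hZ1 : ∀ i, μ {ω | Z i ω = 1} = ENNReal.ofReal p)
    (hZ0 : ∀ i, μ {ω | Z i ω = 0} = ENNReal.ofReal (1 - p)) (P : (α → ℝ) → Prop) :
    μ {ω | P fun i => Z i ω} = ∑ A with P (fun i => if i ∈ A then 1 else 0),
      ENNReal.ofReal p ^ #A * ENNReal.ofReal (1 - p) ^ (Fintype.card α - #A) := by
  set ones : Ω → Finset α := fun ω => {i | Z i ω = 1}
  have hbinary : ∀ᵐ ω ∂μ, ∀ i, Z i ω = if i ∈ ones ω then 1 else 0 := by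
    refine ae_all_iff.2 fun i => ?_
    have hdisj : Disjoint {ω | Z i ω = 1} {ω | Z i ω = 0} :=
      Set.disjoint_left.2 fun ω h1 h0 => one_ne_zero (h1.symm.trans h0)
    have hmass : μ ({ω | Z i ω = 1} ∪ {ω | Z i ω = 0}) = 1 := by
      rw [measure_union hdisj (measurableSet_eq_fun (hZ i) measurable_const), hZ1, hZ0,
        ← ENNReal.ofReal_add hp0 (by linarith), add_sub_cancel, ENNReal.ofReal_one]
    filter_upwards [ae_iff.2 ((prob_compl_eq_zero_iff ((measurableSet_eq_fun (hZ i)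
      measurable_const).union (measurableSet_eq_fun (hZ i) measurable_const))).2 hmass)]
      with ω hω
    rcases hω with h | h
    · simp [ones, show Z i ω = 1 from h]
    · simp [ones, show Z i ω = 0 from h]
  have hfiber : ∀ A, μ (ones ⁻¹' {A})
      = ENNReal.ofReal p ^ #A * ENNReal.ofReal (1 - p) ^ (Fintype.card α - #A) := by
    intro A
    have hcyl : ones ⁻¹' {A} =ᵐ[μ] ⋂ i ∈ (univ : Finset α), Z i ⁻¹' {if i ∈ A then 1 else 0} := by
      refine Filter.eventuallyEq_set.2 ?_
      filter_upwards [hbinary] with ω hω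
      simp only [Set.mem_preimage, Set.mem_singleton_iff, Set.mem_iInter, mem_univ,
        forall_const]
      refine ⟨fun h => h ▸ hω, fun h => ext fun i => ?_⟩
      have := (hω i).symm.trans (h i)
      split_ifs at this <;> simp_all
    rw [measure_congr hcyl, hindep.measure_inter_preimage_eq_mul _
      fun _ _ => measurableSet_singleton _]
    have hmarginal : ∀ i, μ (Z i ⁻¹' {if i ∈ A then 1 else 0})
        = if i ∈ A then ENNReal.ofReal p else ENNReal.ofReal (1 - p) := fun i => by
      split_ifs
      exacts [hZ1 i, hZ0 i]
    simp only [hmarginal, prod_ite, prod_const, filter_mem_eq_inter, univ_inter]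
    rw [filter_not, filter_mem_eq_inter, univ_inter, card_sdiff_of_subset (subset_univ A),
      card_univ]
  have hmeas : ∀ A, MeasurableSet (ones ⁻¹' {A}) := fun A => by
    have : ones ⁻¹' {A} = ⋂ i, {ω | Z i ω = 1 ↔ i ∈ A} := by
      ext ω
      simp [ones, Finset.ext_iff]
    rw [this]
    refine MeasurableSet.iInter fun i => ?_
    have hone : MeasurableSet {ω | Z i ω = 1} := measurableSet_eq_fun (hZ i) measurable_const
    by_cases hi : i ∈ A
    · simpa [hi] using hone
    · simp only [hi, iff_false]
      exact hone.compl
  calc μ {ω | P fun i => Z i ω}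
      = μ (ones ⁻¹' ↑({A | P (fun i => if i ∈ A then 1 else 0)} : Finset (Finset α))) := by
        refine measure_congr (Filter.eventuallyEq_set.2 ?_)
        filter_upwards [hbinary] with ω hω
        simp only [Set.mem_ofPred_eq, Set.mem_preimage, coe_filter, mem_univ, true_and]
        rw [← funext hω]
    _ = _ := by
        rw [← sum_measure_preimage_singleton _ fun A _ => hmeas A]
        exact sum_congr rfl fun A _ => hfiber A

open scoped Classical in
theorem ProbabilityTheory.iIndepFun.cond_sum_eq_apply (hZ : ∀ i, Measurable (Z i))
    (hindep : iIndepFun Z μ) (hp0 : 0 < p) (hp1 : p < 1)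
    (hZ1 : ∀ i, μ {ω | Z i ω = 1} = ENNReal.ofReal p)
    (hZ0 : ∀ i, μ {ω | Z i ω = 0} = ENNReal.ofReal (1 - p)) (m : ℕ)
    (P : (α → ℝ) → Prop) :
    μ[|{ω | ∑ i, Z i ω = m}] {ω | P fun i => Z i ω}
      = #{A ∈ powersetCard m univ | P fun i => if i ∈ A then 1 else 0}
        / (Fintype.card α).choose m := by
  set w := ENNReal.ofReal p ^ m * ENNReal.ofReal (1 - p) ^ (Fintype.card α - m)
  have hw0 : w ≠ 0 := mul_ne_zero (pow_ne_zero _ (ENNReal.ofReal_pos.2 hp0).ne')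
    (pow_ne_zero _ (ENNReal.ofReal_pos.2 (by linarith)).ne')
  have hwtop : w ≠ ⊤ :=
    ENNReal.mul_ne_top (ENNReal.pow_ne_top ENNReal.ofReal_ne_top)
      (ENNReal.pow_ne_top ENNReal.ofReal_ne_top)
  have hlaw := hindep.measure_setOf_eq_sum hZ hp0.le hp1.le hZ1 hZ0
  have hslice : ∀ Q : (α → ℝ) → Prop, μ {ω | ∑ i, Z i ω = m ∧ Q fun i => Z i ω}
      = #{A ∈ powersetCard m univ | Q fun i => if i ∈ A then 1 else 0} * w := by
    intro Q
    rw [hlaw fun v => ∑ i, v i = m ∧ Q v, ← nsmul_eq_mul, ← sum_const]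
    refine sum_congr ?_ fun A hA => ?_
    · ext A
      simp
    · rw [(mem_powersetCard.1 (mem_filter.1 hA).1).2]
  have hE := hslice fun _ => True
  simp only [and_true, filter_true, card_powersetCard, card_univ] at hE
  rw [cond_apply (measurableSet_eq_fun (Finset.measurable_sum _ fun i _ => hZ i) measurable_const),
    ← Set.ofPred_and, hslice, hE, ← ENNReal.div_eq_inv_mul, ENNReal.mul_div_mul_right _ _ hw0 hwtop]

end BernoulliVector

theorem ENNReal.natCast_div_natCast_le_ofReal {a b : ℕ} {x : ℝ} (h : (a : ℝ) ≤ x * b) :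
    (a : ℝ≥0∞) / b ≤ ENNReal.ofReal x := by
  refine ENNReal.div_le_of_le_mul ?_
  rw [← ENNReal.ofReal_natCast, ← ENNReal.ofReal_natCast, ← ENNReal.ofReal_mul' (Nat.cast_nonneg b)]
  exact ENNReal.ofReal_le_ofReal h

theorem div_mul_one_sub_div_le {m n : ℕ} (hm : 0 < m) (hmn : m < n) :
    (m : ℝ) / n * (1 - m / n) ≤ m * (n - m) / (n * (n - 1)) := by
  have hm' : (0 : ℝ) < m := by exact_mod_cast hm
  have hmn' : (m : ℝ) + 1 ≤ n := by exact_mod_cast hmn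
  rw [one_sub_div (by linarith), div_mul_div_comm]
  exact div_le_div_of_nonneg_left (mul_nonneg hm'.le (by linarith)) (by nlinarith) (by nlinarith)

theorem sum_mul_ite_mem_sub_div_eq {α : Type*} [Fintype α] [DecidableEq α] (ψ : α → ℝ)
    {A : Finset α} {m : ℕ} (hA : #A = m) :
    ∑ i, ψ i * ((if i ∈ A then 1 else 0) - m / Fintype.card α)
      = ∑ i ∈ A, (ψ i - (∑ j, ψ j) / Fintype.card α) := by
  simp only [mul_sub, mul_ite, mul_one, mul_zero, sum_sub_distrib, sum_ite_mem, univ_inter,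
    sum_const, hA, nsmul_eq_mul, ← sum_mul]
  ring

/-- Coupling Bernstein-type exponential inequality for a weighted average from a
hypergeometric ensemble: with `γ_{m,n}² = (m(n−m))/(n(n−1)) ∑ (ψᵢ − ψ̄)² ≠ 0` and
`R(ψ,m,n) = (maxᵢ |ψᵢ − ψ̄| / (3γ_{m,n})) max(m/n, 1 − m/n)`, for every `η ≥ 0`,
`P(|γ⁻¹ ∑ ψᵢ(Zᵢ − m/n)| > δ(m,n)η | ∑ Zᵢ = m) ≤ 2 exp(−(η²/2)/(1 + ηR))`. -/
theorem coupling_bernstein_inequality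
    {Ω : Type*} [MeasurableSpace Ω] (μ : Measure Ω) [IsProbabilityMeasure μ]
    (m n : ℕ) (hm : 0 < m) (hmn : m < n)
    (Z : Fin n → Ω → ℝ) (hZmeas : ∀ i, Measurable (Z i))
    (hindep : iIndepFun Z μ)
    (hZ1 : ∀ i, μ {ω | Z i ω = 1} = ENNReal.ofReal ((m : ℝ) / n))
    (hZ0 : ∀ i, μ {ω | Z i ω = 0} = ENNReal.ofReal (1 - (m : ℝ) / n))
    (ψ : Fin n → ℝ) (ψbar γ R : ℝ)
    (hψbar : ψbar = (∑ i, ψ i) / n)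
    (hγ : γ = Real.sqrt
      (((m : ℝ) * ((n : ℝ) - m)) / ((n : ℝ) * ((n : ℝ) - 1)) * ∑ i, (ψ i - ψbar) ^ 2))
    (hγne : γ ≠ 0)
    (hR : R = (⨆ i, |ψ i - ψbar|) / (3 * γ) * max ((m : ℝ) / n) (1 - (m : ℝ) / n))
    (η : ℝ) (hη : 0 ≤ η) :
    (μ[|{ω | ∑ i, Z i ω = (m : ℝ)}])
        {ω | deltaMN m n * η < |γ⁻¹ * ∑ i, ψ i * (Z i ω - (m : ℝ) / n)|} ≤
      ENNReal.ofReal (2 * Real.exp (-(η ^ 2 / 2) / (1 + η * R))) := by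
  have hm' : (0 : ℝ) < m := by exact_mod_cast hm
  have hmn' : (m : ℝ) + 1 ≤ n := by exact_mod_cast hmn
  have hγpos : 0 < γ := (hγ ▸ Real.sqrt_nonneg _).lt_of_ne' hγne
  have hcentred : ∑ i, (ψ i - ψbar) = 0 := by
    rw [sum_sub_distrib, sum_const, card_univ, Fintype.card_fin, nsmul_eq_mul, hψbar]
    field_simp [(hm.trans hmn).ne']
    ring
  have hvar : (m : ℝ) / n * (1 - m / n) * ∑ i, (ψ i - ψbar) ^ 2 ≤ γ ^ 2 := by
    rw [hγ, Real.sq_sqrt (mul_nonneg (div_nonneg (by nlinarith) (by nlinarith)) (by positivity))]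
    exact mul_le_mul_of_nonneg_right (div_mul_one_sub_div_le hm hmn) (by positivity)
  have hcount := card_filter_lt_abs_sum_le (α := Fin n) (R := R) hcentred
    (fun i => le_ciSup (Set.finite_range fun j => |ψ j - ψbar|).bddAbove i) hm (by simpa) hγpos
    (by simpa using hvar) (by simp only [Fintype.card_fin, hR]; field_simp; exact le_rfl) hη
  simp only [Fintype.card_fin] at hcount
  have hstat : ∀ A ∈ powersetCard m (univ : Finset (Fin n)),
      deltaMN m n * η < |γ⁻¹ * ∑ i, ψ i * ((if i ∈ A then 1 else 0) - (m : ℝ) / n)|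
        ↔ γ * deltaMN m n * η < |∑ i ∈ A, (ψ i - ψbar)| := fun A hA => by
    have hsum := sum_mul_ite_mem_sub_div_eq ψ (mem_powersetCard.1 hA).2
    rw [Fintype.card_fin, ← hψbar] at hsum
    rw [hsum, abs_mul, abs_inv, abs_of_pos hγpos, mul_assoc, ← lt_inv_mul_iff₀ hγpos]
  calc _ = _ := hindep.cond_sum_eq_apply hZmeas (div_pos hm' (by linarith))
        ((div_lt_one (by linarith)).2 (by linarith)) hZ1 hZ0 m
        fun v => deltaMN m n * η < |γ⁻¹ * ∑ i, ψ i * (v i - (m : ℝ) / n)|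
    _ ≤ _ := by
        rw [filter_congr hstat, Fintype.card_fin]
        exact ENNReal.natCast_div_natCast_le_ofReal hcount
end

section
/- For every real x ≥ 0 one has (1 + x)·log(1 + x) − x ≥ (x²/2)/(1 + x/3). -/
/-!
Write `h(x) = (1 + x) log (1 + x) - x` and `b(x) = (x² / 2) / (1 + x / 3)`. Both vanish at `0`, and
`h' = log (1 + x)` while `b' = x (6 + x) / (6 (1 + x / 3)²)`. For `x ≥ 0` the classical bound
`log (1 + x) ≥ 2x / (x + 2)` already dominates `b'`: clearing denominators, the gap is `x³ / 3`.
Hence `h - b` is monotone on `[0, ∞)` and stays nonnegative.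
-/

open Real Set

noncomputable def bennettFun (x : ℝ) : ℝ := (1 + x) * log (1 + x) - x

noncomputable def bernsteinFun (x : ℝ) : ℝ := x ^ 2 / 2 / (1 + x / 3)

theorem monotoneOn_Ici_of_hasDerivAt_nonneg {f f' : ℝ → ℝ} {a : ℝ}
    (hf : ∀ t ∈ Ici a, HasDerivAt f (f' t) t) (hf' : ∀ t ∈ Ioi a, 0 ≤ f' t) :
    MonotoneOn f (Ici a) :=
  monotoneOn_of_hasDerivWithinAt_nonneg (convex_Ici a)
    (fun t ht ↦ (hf t ht).continuousAt.continuousWithinAt)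
    (fun t ht ↦ (hf t (interior_subset ht)).hasDerivWithinAt)
    (fun t ht ↦ hf' t (by rwa [interior_Ici] at ht))

theorem hasDerivAt_bennettFun {x : ℝ} (hx : 1 + x ≠ 0) :
    HasDerivAt bennettFun (log (1 + x)) x := by
  have hlin : HasDerivAt (fun t : ℝ ↦ 1 + t) 1 x := (hasDerivAt_id x).const_add 1
  refine ((hlin.mul (hlin.log hx)).sub (hasDerivAt_id x)).congr_deriv ?_
  field_simp
  ring

theorem hasDerivAt_bernsteinFun {x : ℝ} (hx : 1 + x / 3 ≠ 0) :
    HasDerivAt bernsteinFun (x * (6 + x) / (6 * (1 + x / 3) ^ 2)) x := by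
  have hden : HasDerivAt (fun t : ℝ ↦ 1 + t / 3) (1 / 3) x :=
    ((hasDerivAt_id x).div_const 3).const_add 1
  refine (((hasDerivAt_pow 2 x).div_const 2).div hden hx).congr_deriv ?_
  field_simp
  ring

theorem deriv_bernsteinFun_le_log_one_add {x : ℝ} (hx : 0 ≤ x) :
    x * (6 + x) / (6 * (1 + x / 3) ^ 2) ≤ log (1 + x) := by
  refine le_trans ?_ (le_log_one_add_of_nonneg hx)
  rw [div_le_div_iff₀ (by positivity) (by positivity)]
  nlinarith [pow_nonneg hx 3]

theorem bernsteinFun_le_bennettFun {x : ℝ} (hx : 0 ≤ x) : bernsteinFun x ≤ bennettFun x := by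
  have hmono : MonotoneOn (fun t ↦ bennettFun t - bernsteinFun t) (Ici 0) :=
    monotoneOn_Ici_of_hasDerivAt_nonneg
      (fun t (ht : 0 ≤ t) ↦ (hasDerivAt_bennettFun (by positivity)).sub
        (hasDerivAt_bernsteinFun (by positivity)))
      (fun t (ht : 0 < t) ↦ sub_nonneg.mpr (deriv_bernsteinFun_le_log_one_add ht.le))
  have := hmono self_mem_Ici (mem_Ici.mpr hx) hx
  simpa [bennettFun, bernsteinFun] using this

/-- For every real `x ≥ 0`: `(1 + x)·log(1 + x) − x ≥ (x²/2)/(1 + x/3)`. -/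
theorem bennett_to_bernstein (x : ℝ) (hx : 0 ≤ x) :
    x ^ 2 / 2 / (1 + x / 3) ≤ (1 + x) * Real.log (1 + x) - x :=
  bernsteinFun_le_bennettFun hx
end

section
/- For every γ ∈ (0,1] and every Δ ∈ [−1,1] one has (1 + Δ)^{1+γ} ≤ 1 + (1+γ)Δ + (1/2)γ(1+γ)Δ² + 3γΔ²|Δ|. -/
/-!
For `Δ ≥ 0` the cubic term is not needed: Bernoulli's inequality `(1 + y)^γ ≤ 1 + γ y` bounds the
derivative of `(1 + y)^(1+γ)` by that of its second-order Taylor polynomial. For `Δ < 0` write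
`(1 + Δ)^(1+γ) = (1 + Δ) (1 + Δ)^γ`; the concave power `(1 - t)^γ` lies below its second-order
Taylor polynomial (its derivative is compared with the Taylor one through Bernoulli's inequality
with exponent `γ - 1 ∈ [-1, 0]`), and multiplying out leaves the remainder
`γ(1-γ)/2 |Δ|³ ≤ 3γ |Δ|³`.
-/

open Real

lemma one_add_mul_self_le_rpow_one_add_of_nonpos {s : ℝ} (hs : -1 < s) {p : ℝ} (hp1 : -1 ≤ p)
    (hp2 : p ≤ 0) : 1 + p * s ≤ (1 + s) ^ p := by
  have hbase : 0 < 1 + s := by linarith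
  have hpos : 0 < (1 + s) ^ (-p) := rpow_pos_of_pos hbase _
  have hbern : (1 + s) ^ (-p) ≤ 1 - p * s := by
    simpa [neg_mul, ← sub_eq_add_neg] using
      rpow_one_add_le_one_add_mul_self hs.le (neg_nonneg.2 hp2) (by linarith)
  calc 1 + p * s ≤ (1 - p * s)⁻¹ := by
        rw [← one_div, le_div_iff₀ (hpos.trans_le hbern)]
        nlinarith [sq_nonneg (p * s)]
    _ ≤ ((1 + s) ^ (-p))⁻¹ := inv_anti₀ hpos hbern
    _ = (1 + s) ^ p := by rw [rpow_neg hbase.le, inv_inv]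

lemma one_add_rpow_one_add_le {γ x : ℝ} (hγ0 : 0 ≤ γ) (hγ1 : γ ≤ 1) (hx : 0 ≤ x) :
    (1 + x) ^ (1 + γ) ≤ 1 + (1 + γ) * x + γ * (1 + γ) / 2 * x ^ 2 := by
  have hf (y : ℝ) : HasDerivAt (fun y => (1 + y) ^ (1 + γ)) (1 * (1 + γ) * (1 + y) ^ γ) y := by
    simpa using ((hasDerivAt_id y).const_add 1).rpow_const (p := 1 + γ) (Or.inr (by linarith))
  have hB (y : ℝ) : HasDerivAt (fun y => 1 + (1 + γ) * y + γ * (1 + γ) / 2 * y ^ 2)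
      ((1 + γ) + γ * (1 + γ) * y) y :=
    ((((hasDerivAt_id' y).const_mul (1 + γ)).const_add 1).add
      ((hasDerivAt_pow 2 y).const_mul (γ * (1 + γ) / 2))).congr_deriv (by ring)
  refine image_le_of_deriv_right_le_deriv_boundary (a := 0) (b := x)
    (fun y _ => (hf y).continuousAt.continuousWithinAt) (fun y _ => (hf y).hasDerivWithinAt)
    (by simp) (fun y _ => (hB y).continuousAt.continuousWithinAt)
    (fun y _ => (hB y).hasDerivWithinAt) (fun y hy => ?_) ⟨hx, le_rfl⟩
  have hbern := rpow_one_add_le_one_add_mul_self (by linarith [hy.1] : -1 ≤ y) hγ0 hγ1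
  nlinarith

lemma one_sub_rpow_le {γ t : ℝ} (hγ0 : 0 ≤ γ) (hγ1 : γ ≤ 1) (ht0 : 0 ≤ t) (ht1 : t ≤ 1) :
    (1 - t) ^ γ ≤ 1 - γ * t - γ * (1 - γ) / 2 * t ^ 2 := by
  have hf (s : ℝ) (hs : s < 1) :
      HasDerivAt (fun s => (1 - s) ^ γ) (-1 * γ * (1 - s) ^ (γ - 1)) s :=
    ((hasDerivAt_id s).const_sub 1).rpow_const (Or.inl (sub_pos.2 hs).ne')
  have hB (s : ℝ) : HasDerivAt (fun s => 1 - γ * s - γ * (1 - γ) / 2 * s ^ 2)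
      (-γ - γ * (1 - γ) * s) s :=
    ((((hasDerivAt_id' s).const_mul γ).const_sub 1).sub
      ((hasDerivAt_pow 2 s).const_mul (γ * (1 - γ) / 2))).congr_deriv (by ring)
  refine image_le_of_deriv_right_le_deriv_boundary (a := 0) (b := t)
    ((continuous_const.sub continuous_id).continuousOn.rpow_const fun _ _ => Or.inr hγ0)
    (fun s hs => (hf s (by linarith [hs.2])).hasDerivWithinAt)
    (by simp) (fun s _ => (hB s).continuousAt.continuousWithinAt)
    (fun s _ => (hB s).hasDerivWithinAt) (fun s hs => ?_) ⟨ht0, le_rfl⟩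
  have hbern := one_add_mul_self_le_rpow_one_add_of_nonpos (s := -s) (by linarith [hs.2])
    (p := γ - 1) (by linarith) (by linarith)
  rw [← sub_eq_add_neg] at hbern
  nlinarith

theorem one_add_rpow_bound_general (γ Δ : ℝ) (hγ0 : 0 < γ) (hγ1 : γ ≤ 1)
    (hΔ1 : -1 ≤ Δ) :
    (1 + Δ) ^ (1 + γ) ≤
      1 + (1 + γ) * Δ + 1 / 2 * γ * (1 + γ) * Δ ^ 2 + 3 * γ * Δ ^ 2 * |Δ| := by
  rcases le_or_gt 0 Δ with hΔ | hΔ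
  · have hcubic : 0 ≤ 3 * γ * Δ ^ 2 * |Δ| := by positivity
    linarith [one_add_rpow_one_add_le hγ0.le hγ1 hΔ]
  · have hconcave : (1 + Δ) ^ γ ≤ 1 + γ * Δ - γ * (1 - γ) / 2 * Δ ^ 2 := by
      simpa [sub_eq_add_neg] using one_sub_rpow_le hγ0.le hγ1 (neg_nonneg.2 hΔ.le) (by linarith)
    calc (1 + Δ) ^ (1 + γ) = (1 + Δ) * (1 + Δ) ^ γ := by
          rw [rpow_add' (by linarith) (by linarith), rpow_one]
      _ ≤ (1 + Δ) * (1 + γ * Δ - γ * (1 - γ) / 2 * Δ ^ 2) :=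
          mul_le_mul_of_nonneg_left hconcave (by linarith)
      _ = 1 + (1 + γ) * Δ + 1 / 2 * γ * (1 + γ) * Δ ^ 2 + γ * (1 - γ) / 2 * Δ ^ 2 * |Δ| := by
          rw [abs_of_neg hΔ]; ring
      _ ≤ _ := by gcongr; nlinarith

/-- For every `γ ∈ (0,1]` and every `Δ ∈ [−1,1]`:
`(1 + Δ)^{1+γ} ≤ 1 + (1+γ)Δ + (1/2)γ(1+γ)Δ² + 3γΔ²|Δ|`, where the power is the real power
(for `Δ = −1` the left-hand side is `0`). -/
theorem one_add_rpow_bound (γ Δ : ℝ) (hγ0 : 0 < γ) (hγ1 : γ ≤ 1)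
    (hΔ1 : -1 ≤ Δ) (hΔ2 : Δ ≤ 1) :
    (1 + Δ) ^ (1 + γ) ≤
      1 + (1 + γ) * Δ + 1 / 2 * γ * (1 + γ) * Δ ^ 2 + 3 * γ * Δ ^ 2 * |Δ| :=
  one_add_rpow_bound_general γ Δ hγ0 hγ1 hΔ1
end

section
/- Fix d ≥ 1 and 0 < β ≤ 1. The function γ_β(x) := (1 − ‖x‖₂^β)_+ (positive part) belongs to H_d(β,1;ℝ^d), satisfies γ_β(0) = 1, lies in L²(ℝ^d), and minimizes the L²-norm among all γ ∈ H_d(β,1;ℝ^d) ∩ L²(ℝ^d) with γ(0) ≥ 1. -/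
/-!
For `0 < β ≤ 1` the map `t ↦ t ^ β` is subadditive on `[0, ∞)`, so `x ↦ ‖x‖ ^ β` is `β`-Hölder
with constant `1`, and truncation by `max · 0` preserves this; `γ_β` is continuous with support in
the closed unit ball, hence in `L²`. Conversely, the Hölder condition between `0` and `x` gives
`g x ≥ g 0 - ‖x‖ ^ β ≥ 1 - ‖x‖ ^ β`, so `|g| ≥ γ_β` pointwise and the `L²` norms compare.
-/

open MeasureTheory

/-- The isotropic Hölder class `H_d(β, L; I)` for `β ≤ 1`: functions with
`|f x − f y| ≤ L‖x − y‖₂^β` for all `x, y ∈ I`. -/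
def IsotropicHolder (d : ℕ) (β L : ℝ) (I : Set (EuclideanSpace ℝ (Fin d)))
    (f : EuclideanSpace ℝ (Fin d) → ℝ) : Prop :=
  ∀ x ∈ I, ∀ y ∈ I, |f x - f y| ≤ L * ‖x - y‖ ^ β

namespace Real

variable {β a b : ℝ}

lemma rpow_sub_rpow_le_rpow_sub (hβ0 : 0 ≤ β) (hβ1 : β ≤ 1) (hb : 0 ≤ b) (hba : b ≤ a) :
    a ^ β - b ^ β ≤ (a - b) ^ β := by
  have h := rpow_add_le_add_rpow (sub_nonneg.2 hba) hb hβ0 hβ1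
  rw [sub_add_cancel] at h
  linarith

lemma abs_rpow_sub_rpow_le (hβ0 : 0 ≤ β) (hβ1 : β ≤ 1) (ha : 0 ≤ a) (hb : 0 ≤ b) :
    |a ^ β - b ^ β| ≤ |a - b| ^ β := by
  wlog hba : b ≤ a generalizing a b
  · rw [abs_sub_comm, abs_sub_comm a]
    exact this hb ha (le_of_not_ge hba)
  rw [abs_of_nonneg (sub_nonneg.2 (rpow_le_rpow hb hba hβ0)), abs_of_nonneg (sub_nonneg.2 hba)]
  exact rpow_sub_rpow_le_rpow_sub hβ0 hβ1 hb hba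

end Real

section NormRpow

variable {E : Type*} {β : ℝ}

lemma abs_norm_rpow_sub_norm_rpow_le [SeminormedAddCommGroup E] (hβ0 : 0 ≤ β) (hβ1 : β ≤ 1)
    (x y : E) : |‖x‖ ^ β - ‖y‖ ^ β| ≤ ‖x - y‖ ^ β :=
  (Real.abs_rpow_sub_rpow_le hβ0 hβ1 (norm_nonneg x) (norm_nonneg y)).trans
    (Real.rpow_le_rpow (abs_nonneg _) (abs_norm_sub_norm_le x y) hβ0)

lemma abs_posPart_one_sub_norm_rpow_sub_le [SeminormedAddCommGroup E] (hβ0 : 0 ≤ β)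
    (hβ1 : β ≤ 1) (x y : E) :
    |max (1 - ‖x‖ ^ β) 0 - max (1 - ‖y‖ ^ β) 0| ≤ ‖x - y‖ ^ β :=
  calc |max (1 - ‖x‖ ^ β) 0 - max (1 - ‖y‖ ^ β) 0|
      ≤ |(1 - ‖x‖ ^ β) - (1 - ‖y‖ ^ β)| := abs_max_sub_max_le_abs _ _ _
    _ = |‖y‖ ^ β - ‖x‖ ^ β| := by rw [sub_sub_sub_cancel_left]
    _ ≤ ‖y - x‖ ^ β := abs_norm_rpow_sub_norm_rpow_le hβ0 hβ1 y x
    _ = ‖x - y‖ ^ β := by rw [norm_sub_rev]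

lemma hasCompactSupport_posPart_one_sub_norm_rpow [NormedAddCommGroup E] [ProperSpace E]
    (hβ0 : 0 ≤ β) : HasCompactSupport fun x : E => max (1 - ‖x‖ ^ β) 0 := by
  refine HasCompactSupport.intro (isCompact_closedBall 0 1) fun x hx => ?_
  rw [Metric.mem_closedBall, dist_zero_right, not_le] at hx
  exact max_eq_right (sub_nonpos.2 (Real.one_le_rpow hx.le hβ0))

lemma memLp_posPart_one_sub_norm_rpow [NormedAddCommGroup E] [ProperSpace E] [MeasurableSpace E]
    [OpensMeasurableSpace E] (μ : Measure E) [IsFiniteMeasureOnCompacts μ] (p : ENNReal)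
    (hβ0 : 0 ≤ β) : MemLp (fun x : E => max (1 - ‖x‖ ^ β) 0) p μ :=
  Continuous.memLp_of_hasCompactSupport
    ((continuous_const.sub ((Real.continuous_rpow_const hβ0).comp continuous_norm)).max
      continuous_const)
    (hasCompactSupport_posPart_one_sub_norm_rpow hβ0)

end NormRpow

section IsotropicHolder

variable {d : ℕ} {β : ℝ}

lemma isotropicHolder_posPart_one_sub_norm_rpow (hβ0 : 0 ≤ β) (hβ1 : β ≤ 1) :
    IsotropicHolder d β 1 Set.univ fun x => max (1 - ‖x‖ ^ β) 0 := fun x _ y _ => by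
  rw [one_mul]
  exact abs_posPart_one_sub_norm_rpow_sub_le hβ0 hβ1 x y

lemma IsotropicHolder.one_sub_norm_rpow_le {g : EuclideanSpace ℝ (Fin d) → ℝ}
    (hg : IsotropicHolder d β 1 Set.univ g) (hg0 : 1 ≤ g 0) (x : EuclideanSpace ℝ (Fin d)) :
    1 - ‖x‖ ^ β ≤ g x := by
  have h := (abs_le.1 (hg 0 trivial x trivial)).2
  rw [one_mul, zero_sub, norm_neg] at h
  linarith

lemma IsotropicHolder.eLpNorm_posPart_one_sub_norm_rpow_le {g : EuclideanSpace ℝ (Fin d) → ℝ}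
    (hg : IsotropicHolder d β 1 Set.univ g) (hg0 : 1 ≤ g 0) (p : ENNReal)
    (μ : Measure (EuclideanSpace ℝ (Fin d))) :
    eLpNorm (fun x => max (1 - ‖x‖ ^ β) 0) p μ ≤ eLpNorm g p μ :=
  eLpNorm_mono fun x => by
    rw [Real.norm_of_nonneg (le_max_right _ _), Real.norm_eq_abs]
    exact max_le ((hg.one_sub_norm_rpow_le hg0 x).trans (le_abs_self _)) (abs_nonneg _)

end IsotropicHolder

theorem optimal_recovery_solution_beta_le_one_general (d : ℕ) (β : ℝ)
    (hβ0 : 0 < β) (hβ1 : β ≤ 1) :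
    IsotropicHolder d β 1 Set.univ (fun x : EuclideanSpace ℝ (Fin d) => max (1 - ‖x‖ ^ β) 0) ∧
    max (1 - ‖(0 : EuclideanSpace ℝ (Fin d))‖ ^ β) 0 = 1 ∧
    MemLp (fun x : EuclideanSpace ℝ (Fin d) => max (1 - ‖x‖ ^ β) 0) 2 volume ∧
    ∀ g : EuclideanSpace ℝ (Fin d) → ℝ,
      IsotropicHolder d β 1 Set.univ g → MemLp g 2 volume → 1 ≤ g 0 →
      eLpNorm (fun x : EuclideanSpace ℝ (Fin d) => max (1 - ‖x‖ ^ β) 0) 2 volume ≤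
        eLpNorm g 2 volume :=
  ⟨isotropicHolder_posPart_one_sub_norm_rpow hβ0.le hβ1,
    by simp [Real.zero_rpow hβ0.ne'],
    memLp_posPart_one_sub_norm_rpow volume 2 hβ0.le,
    fun _ hg _ hg0 => hg.eLpNorm_posPart_one_sub_norm_rpow_le hg0 2 volume⟩

/-- For `0 < β ≤ 1`, the function `γ_β(x) = (1 − ‖x‖₂^β)₊` belongs to `H_d(β,1;ℝ^d)`,
satisfies `γ_β(0) = 1`, lies in `L²(ℝ^d)`, and minimizes the `L²`-norm among all
`γ ∈ H_d(β,1;ℝ^d) ∩ L²` with `γ(0) ≥ 1`. -/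
theorem optimal_recovery_solution_beta_le_one (d : ℕ) (hd : 1 ≤ d) (β : ℝ)
    (hβ0 : 0 < β) (hβ1 : β ≤ 1) :
    IsotropicHolder d β 1 Set.univ (fun x : EuclideanSpace ℝ (Fin d) => max (1 - ‖x‖ ^ β) 0) ∧
    max (1 - ‖(0 : EuclideanSpace ℝ (Fin d))‖ ^ β) 0 = 1 ∧
    MemLp (fun x : EuclideanSpace ℝ (Fin d) => max (1 - ‖x‖ ^ β) 0) 2 volume ∧
    ∀ g : EuclideanSpace ℝ (Fin d) → ℝ,
      IsotropicHolder d β 1 Set.univ g → MemLp g 2 volume → 1 ≤ g 0 →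
      eLpNorm (fun x : EuclideanSpace ℝ (Fin d) => max (1 - ‖x‖ ^ β) 0) 2 volume ≤
        eLpNorm g 2 volume :=
  optimal_recovery_solution_beta_le_one_general d β hβ0 hβ1
end

section
/- Fix d ≥ 1 and β > 1. There exists a constant C = C(β,d) > 0 such that for every L > 0, every D > 0 and every φ ∈ H_d(β,L;[0,1]^d) with sup_{x∈[0,1]^d} |φ(x)| ≤ D, all partial derivatives D^j φ with multi-index j satisfying 1 ≤ |j| ≤ ⌊β⌋ obey sup_{x∈[0,1]^d} |D^j φ(x)| ≤ C(D + L). -/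
/-!
At an interior point `y`, walk from `y` along `w = ∑_{j ∈ S} ±e_{v j}`, the signs pointing towards
the centre of the cube, so that `y + t • w` stays in the cube for `0 ≤ t ≤ 1 / (2(⌊β⌋ + 1))`. Along
this segment the Taylor polynomial of `φ` at `y` is a polynomial in `t` of degree `⌊β⌋`, bounded
by `D + L` because `|φ| ≤ D` and the Taylor remainder is at most `L`. All norms on the
finite-dimensional space of such polynomials are equivalent, so its coefficients, among them
`D^k φ(y)[w, …, w] / k!`, are `O(D + L)`. Since `D^k φ(y)` is symmetric, the polarization
identity recovers `D^k φ(y)[±e_{v 1}, …, ±e_{v k}]` from these diagonal values. The bound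
extends from the interior to the closed cube by continuity of `D^k φ`.
-/

/-- The unit cube `[0,1]^d` in `ℝ^d`. -/
def unitCube (d : ℕ) : Set (EuclideanSpace ℝ (Fin d)) :=
  {x | ∀ i, x i ∈ Set.Icc (0 : ℝ) 1}

/-- Multivariate Taylor polynomial of `f` at `y`, of order `k`, evaluated at `x`
(derivatives taken within `I`). -/
noncomputable def taylorPoly (d : ℕ) (f : EuclideanSpace ℝ (Fin d) → ℝ)
    (I : Set (EuclideanSpace ℝ (Fin d))) (k : ℕ) (y x : EuclideanSpace ℝ (Fin d)) : ℝ :=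
  ∑ i ∈ Finset.range (k + 1),
    (i.factorial : ℝ)⁻¹ * iteratedFDerivWithin ℝ i f I y (fun _ => x - y)

/-- The isotropic Hölder class `H_d(β, L; I)` for `β > 1`: `⌊β⌋`-times continuously
differentiable functions whose Taylor polynomial of order `⌊β⌋ = ⌈β⌉₊ - 1` (the largest
integer strictly smaller than `β`) approximates `f` to order `L‖x − y‖₂^β`. -/
def IsotropicHolderGT1 (d : ℕ) (β L : ℝ) (I : Set (EuclideanSpace ℝ (Fin d)))
    (f : EuclideanSpace ℝ (Fin d) → ℝ) : Prop :=
  ContDiffOn ℝ (⌈β⌉₊ - 1 : ℕ) f I ∧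
    ∀ x ∈ I, ∀ y ∈ I, |f x - taylorPoly d f I (⌈β⌉₊ - 1) y x| ≤ L * ‖x - y‖ ^ β

open Set Function Equiv Finset Topology Polynomial

theorem Finset.sum_ite_forall_notMem_neg_one_pow {α β : Type*} [Fintype α] [DecidableEq α]
    [Fintype β] (r : β → α) :
    ∑ T : Finset α, (if ∀ i, r i ∉ T then (-1 : ℤ) ^ #T else 0) =
      if Surjective r then 1 else 0 := by
  have hfilter : univ.filter (fun T : Finset α => ∀ i, r i ∉ T) = (univ.image r)ᶜ.powerset := by
    ext T
    simp only [mem_filter, mem_univ, true_and, mem_powerset, subset_iff, mem_compl, mem_image]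
    grind
  have hsurj : (univ.image r)ᶜ = ∅ ↔ Surjective r := by
    simp [compl_eq_empty_iff, eq_univ_iff_forall, Surjective]
  rw [← sum_filter, hfilter, sum_powerset_neg_one_pow_card]
  exact if_congr hsurj rfl rfl

namespace MultilinearMap

variable {R M N ι : Type*} [Fintype ι] [DecidableEq ι]

theorem polarization [CommSemiring R] [AddCommMonoid M] [AddCommGroup N] [Module R M] [Module R N]
    (g : MultilinearMap R (fun _ : ι => M) N) (hg : ∀ (v : ι → M) (σ : Perm ι), g (v ∘ σ) = g v)
    (z : ι → M) :
    ∑ T : Finset ι, (-1 : ℤ) ^ #T • g (fun _ => ∑ j ∈ Tᶜ, z j) =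
      (Fintype.card ι).factorial • g z := by
  -- After expanding by multilinearity, the coefficient of `g (z ∘ r)` is an alternating sum over
  -- the sets `T` missing the range of `r`; it vanishes unless `r` is a permutation.
  calc ∑ T : Finset ι, (-1 : ℤ) ^ #T • g (fun _ => ∑ j ∈ Tᶜ, z j)
      = ∑ T : Finset ι, ∑ r : ι → ι, (if ∀ i, r i ∉ T then (-1 : ℤ) ^ #T else 0) • g (z ∘ r) := by
        refine sum_congr rfl fun T _ => ?_
        have hpi : Fintype.piFinset (fun _ => Tᶜ) = univ.filter fun r : ι → ι => ∀ i, r i ∉ T := by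
          ext r; simp [Fintype.mem_piFinset]
        simp only [g.map_sum_finset, hpi, sum_filter, smul_sum, smul_ite, smul_zero, ite_smul,
          zero_smul]
        rfl
    _ = ∑ r : ι → ι, (if Surjective r then 1 else 0 : ℤ) • g (z ∘ r) := by
        rw [sum_comm]
        simp only [← sum_smul, Finset.sum_ite_forall_notMem_neg_one_pow]
    _ = ∑ σ : Perm ι, g (z ∘ σ) := by
        simp only [ite_smul, one_smul, zero_smul, ← sum_filter, Finite.surjective_iff_bijective]
        rw [sum_subtype (p := Bijective) _ (by simp)]
        exact Fintype.sum_equiv bijectiveEquiv _ _ fun _ => rfl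
    _ = (Fintype.card ι).factorial • g z := by simp [hg, Fintype.card_perm]

theorem abs_apply_le_of_abs_apply_diag_le [AddCommMonoid M] [Module ℝ M]
    (g : MultilinearMap ℝ (fun _ : ι => M) ℝ) (hg : ∀ (v : ι → M) (σ : Perm ι), g (v ∘ σ) = g v)
    (z : ι → M) {B : ℝ}
    (hB : ∀ T : Finset ι, |g (fun _ => ∑ j ∈ Tᶜ, z j)| ≤ (Fintype.card ι).factorial * B) :
    |g z| ≤ 2 ^ Fintype.card ι * B := by
  have hfac : (0 : ℝ) < (Fintype.card ι).factorial := mod_cast Nat.factorial_pos _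
  have hpol := g.polarization hg z
  simp only [zsmul_eq_mul, nsmul_eq_mul] at hpol
  have hsum : (Fintype.card ι).factorial * |g z| ≤
      (Fintype.card ι).factorial * (2 ^ Fintype.card ι * B) :=
    calc (Fintype.card ι).factorial * |g z|
        = |∑ T : Finset ι, (((-1 : ℤ) ^ #T : ℤ) : ℝ) * g (fun _ => ∑ j ∈ Tᶜ, z j)| := by
          rw [hpol, abs_mul, abs_of_pos hfac]
      _ ≤ ∑ T : Finset ι, (Fintype.card ι).factorial * B := by
          refine (abs_sum_le_sum_abs _ _).trans (sum_le_sum fun T _ => ?_)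
          simpa using hB T
      _ = (Fintype.card ι).factorial * (2 ^ Fintype.card ι * B) := by
          rw [sum_const, card_univ, Fintype.card_finset, nsmul_eq_mul]; push_cast; ring
  exact le_of_mul_le_mul_left hsum hfac

end MultilinearMap

section Symmetry

variable {𝕜 E F : Type*} [NontriviallyNormedField 𝕜]
  [NormedAddCommGroup E] [NormedSpace 𝕜 E] [NormedAddCommGroup F] [NormedSpace 𝕜 F]
  {f : E → F} {x : E}

theorem iteratedFDeriv_succ_comp_swap_succ {n : ℕ} {i j : Fin n}
    (hd : DifferentiableAt 𝕜 (iteratedFDeriv 𝕜 n f) x)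
    (hsymm : ∀ᶠ y in 𝓝 x, ∀ w, iteratedFDeriv 𝕜 n f y (w ∘ swap i j) = iteratedFDeriv 𝕜 n f y w)
    (v : Fin (n + 1) → E) :
    iteratedFDeriv 𝕜 (n + 1) f x (v ∘ swap i.succ j.succ) = iteratedFDeriv 𝕜 (n + 1) f x v := by
  have htail : Fin.tail (v ∘ swap i.succ j.succ) = Fin.tail v ∘ swap i j := by
    ext k
    simp [Fin.tail, (Fin.succ_injective n).swap_apply]
  have hhead : (v ∘ swap i.succ j.succ) 0 = v 0 := by
    simp [swap_apply_of_ne_of_ne (Fin.succ_ne_zero i).symm (Fin.succ_ne_zero j).symm]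
  have hslice : (fun y => iteratedFDeriv 𝕜 n f y (Fin.tail v ∘ swap i j)) =ᶠ[𝓝 x]
      fun y => iteratedFDeriv 𝕜 n f y (Fin.tail v) := hsymm.mono fun y hy => hy _
  rw [hd.iteratedFDeriv_succ_apply_left', hd.iteratedFDeriv_succ_apply_left', htail, hhead,
    hslice.fderiv_eq]

variable [IsRCLikeNormedField 𝕜]

theorem iteratedFDeriv_comp_swap_zero_one {m : ℕ} (hf : ContDiffAt 𝕜 (m + 2) f x)
    (v : Fin (m + 2) → E) :
    iteratedFDeriv 𝕜 (m + 2) f x (v ∘ swap 0 1) = iteratedFDeriv 𝕜 (m + 2) f x v := by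
  have hsymm : IsSymmSndFDerivAt 𝕜 (iteratedFDeriv 𝕜 m f) x :=
    (hf.iteratedFDeriv_right (m := 2) (i := m) (by rw [add_comm])).isSymmSndFDerivAt (by simp)
  have hsecond : ∀ w : Fin (m + 2) → E, iteratedFDeriv 𝕜 (m + 2) f x w =
      fderiv 𝕜 (fderiv 𝕜 (iteratedFDeriv 𝕜 m f)) x (w 0) (w 1) (Fin.tail (Fin.tail w)) := by
    intro w
    have hcurry := LinearIsometryEquiv.comp_fderiv (𝕜 := 𝕜)
      (iso := (continuousMultilinearCurryLeftEquiv 𝕜 (fun _ : Fin (m + 1) => E) F).symm)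
      (f := fderiv 𝕜 (iteratedFDeriv 𝕜 m f)) (x := x)
    rw [iteratedFDeriv_succ_apply_left, iteratedFDeriv_succ_eq_comp_left, hcurry]
    rfl
  have htail : Fin.tail (Fin.tail (v ∘ swap 0 1)) = Fin.tail (Fin.tail v) := by
    ext i
    simp [Fin.tail, swap_apply_of_ne_of_ne (Fin.succ_ne_zero _) (Fin.succ_succ_ne_one i)]
  rw [hsecond, hsecond, htail]
  simp [hsymm (v 1) (v 0)]

/-- Unlike `ContDiffAt.iteratedFDeriv_comp_perm`, only finite smoothness is assumed. -/
theorem ContDiffAt.iteratedFDeriv_comp_perm_of_nat {n : ℕ} (hf : ContDiffAt 𝕜 n f x)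
    (v : Fin n → E) (σ : Perm (Fin n)) :
    iteratedFDeriv 𝕜 n f x (v ∘ σ) = iteratedFDeriv 𝕜 n f x v := by
  induction n generalizing f x with
  | zero => exact congrArg _ (Subsingleton.elim _ _)
  | succ n ih =>
    -- Adjacent transpositions generate: the first one is Schwarz's theorem, the others come from
    -- the symmetry of the `n`-th derivative near `x`.
    have hσ : σ ∈ Submonoid.closure (range fun i : Fin n ↦ swap i.castSucc i.succ) := by
      rw [Perm.mclosure_swap_castSucc_succ]; trivial
    induction hσ using Submonoid.closure_induction generalizing v with
    | mem τ hτ =>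
      obtain ⟨i, rfl⟩ := hτ
      cases n with
      | zero => exact i.elim0
      | succ n =>
        cases i using Fin.cases with
        | zero => exact iteratedFDeriv_comp_swap_zero_one hf v
        | succ i =>
          have hnear : ∀ᶠ y in 𝓝 x, ContDiffAt 𝕜 (n + 1) f y :=
            (hf.eventually (by simp)).mono fun y hy => hy.of_le (by norm_cast; omega)
          have hd : DifferentiableAt 𝕜 (iteratedFDeriv 𝕜 (n + 1) f) x :=
            (hf.iteratedFDeriv_right (m := 1) (i := n + 1) (by norm_cast; omega)).differentiableAt
              one_ne_zero
          dsimp only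
          rw [← Fin.succ_castSucc]
          exact iteratedFDeriv_succ_comp_swap_succ hd (hnear.mono fun y hy w => ih hy w _) v
    | one => rfl
    | mul τ ρ _ _ hτ hρ => rw [Perm.coe_mul, ← comp_assoc, hρ, hτ]

end Symmetry

theorem exists_abs_le_mul_of_abs_sum_mul_pow_le {s : Set ℝ} (hs : IsCompact s)
    (hinf : s.Infinite) (n : ℕ) :
    ∃ C > 0, ∀ (a : Fin n → ℝ) (M : ℝ), (∀ t ∈ s, |∑ i, a i * t ^ (i : ℕ)| ≤ M) →
      ∀ i, |a i| ≤ C * M := by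
  have := isCompact_iff_compactSpace.mp hs
  have : Nonempty s := hinf.nonempty.to_subtype
  let T : (Fin n → ℝ) →ₗ[ℝ] C(s, ℝ) :=
    ∑ i : Fin n, (LinearMap.proj i).smulRight (⟨fun t => (t : ℝ) ^ (i : ℕ), by fun_prop⟩ : C(s, ℝ))
  have hT : ∀ a (t : s), T a t = ∑ i, a i * (t : ℝ) ^ (i : ℕ) := by
    intro a t
    simp [T]
  have hker : LinearMap.ker T = ⊥ := by
    rw [LinearMap.ker_eq_bot']
    intro a ha
    let p := (degreeLTEquiv ℝ n).symm a
    have hroots : s ⊆ {t | (p : ℝ[X]).IsRoot t} := by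
      intro t ht
      have := congrArg (fun g : C(s, ℝ) => g ⟨t, ht⟩) ha
      simp only [hT, ContinuousMap.zero_apply] at this
      simpa [IsRoot, eval_eq_sum_degreeLTEquiv p.2, p] using this
    have hp : (p : ℝ[X]) = 0 := eq_zero_of_infinite_isRoot _ (hinf.mono hroots)
    simpa [p] using congrArg (degreeLTEquiv ℝ n) (Subtype.ext hp : p = 0)
  obtain ⟨K, hK0, hK⟩ := T.exists_antilipschitzWith hker
  refine ⟨K, hK0, fun a M hM i => ?_⟩
  have hTa : ‖T a‖ ≤ M := (ContinuousMap.norm_le_of_nonempty _).2 fun t => by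
    simpa [Real.norm_eq_abs, hT] using hM t t.2
  calc |a i| ≤ ‖a‖ := norm_le_pi_norm a i
    _ ≤ K * ‖T a‖ := by simpa using hK.le_mul_dist a 0
    _ ≤ K * M := by gcongr

theorem unitCube_eq_preimage (d : ℕ) :
    unitCube d = (EuclideanSpace.equiv (Fin d) ℝ).toHomeomorph ⁻¹' univ.pi fun _ => Icc 0 1 := by
  ext x; simp only [unitCube, Set.mem_preimage, Set.mem_univ_pi]; rfl

theorem convex_unitCube (d : ℕ) : Convex ℝ (unitCube d) := by
  rw [unitCube_eq_preimage]
  exact (convex_pi fun _ _ => convex_Icc 0 1).linear_preimage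
    (EuclideanSpace.equiv (Fin d) ℝ).toLinearMap

theorem closure_interior_unitCube (d : ℕ) : closure (interior (unitCube d)) = unitCube d := by
  rw [unitCube_eq_preimage, ← Homeomorph.preimage_interior, ← Homeomorph.preimage_closure,
    interior_pi_set finite_univ, closure_pi_set]
  simp

theorem uniqueDiffOn_unitCube (d : ℕ) : UniqueDiffOn ℝ (unitCube d) := by
  refine uniqueDiffOn_convex (convex_unitCube d) (Nonempty.of_closure ?_)
  rw [closure_interior_unitCube]
  exact ⟨0, fun i => by simp⟩


theorem taylorPoly_add_smul (d : ℕ) (f : EuclideanSpace ℝ (Fin d) → ℝ)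
    (I : Set (EuclideanSpace ℝ (Fin d))) (m : ℕ) (y w : EuclideanSpace ℝ (Fin d)) (t : ℝ) :
    taylorPoly d f I m y (y + t • w) = ∑ i : Fin (m + 1),
      ((i : ℕ).factorial : ℝ)⁻¹ * iteratedFDerivWithin ℝ i f I y (fun _ => w) * t ^ (i : ℕ) := by
  rw [taylorPoly, add_sub_cancel_left, ← Fin.sum_univ_eq_sum_range]
  refine sum_congr rfl fun i _ => ?_
  rw [show (fun _ : Fin i => t • w) = fun j => (fun _ => t) j • (fun _ => w) j from rfl,
    ContinuousMultilinearMap.map_smul_univ, prod_const, card_univ, Fintype.card_fin, smul_eq_mul]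
  ring

theorem IsotropicHolderGT1.abs_taylorPoly_le {d : ℕ} {β L D : ℝ}
    {I : Set (EuclideanSpace ℝ (Fin d))} {φ : EuclideanSpace ℝ (Fin d) → ℝ}
    (hφ : IsotropicHolderGT1 d β L I φ) (hβ : 0 ≤ β) (hL : 0 ≤ L) (hD : ∀ x ∈ I, |φ x| ≤ D)
    {x y : EuclideanSpace ℝ (Fin d)} (hx : x ∈ I) (hy : y ∈ I) (hxy : ‖x - y‖ ≤ 1) :
    |taylorPoly d φ I (⌈β⌉₊ - 1) y x| ≤ D + L := by
  have hrem : L * ‖x - y‖ ^ β ≤ L :=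
    mul_le_of_le_one_right hL (Real.rpow_le_one (norm_nonneg _) hxy hβ)
  calc |taylorPoly d φ I (⌈β⌉₊ - 1) y x|
      = |φ x - (φ x - taylorPoly d φ I (⌈β⌉₊ - 1) y x)| := by ring_nf
    _ ≤ |φ x| + |φ x - taylorPoly d φ I (⌈β⌉₊ - 1) y x| := abs_sub _ _
    _ ≤ D + L := by linarith [hD x hx, hφ.2 x hx y hy]

theorem IsotropicHolderGT1.abs_iteratedFDerivWithin_diag_le {d m : ℕ} {β L D δ C : ℝ}
    {I : Set (EuclideanSpace ℝ (Fin d))} {φ : EuclideanSpace ℝ (Fin d) → ℝ}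
    (hφ : IsotropicHolderGT1 d β L I φ) (hm : ⌈β⌉₊ - 1 = m) (hβ : 0 ≤ β) (hL : 0 ≤ L)
    (hD : ∀ x ∈ I, |φ x| ≤ D)
    (hcoeff : ∀ (a : Fin (m + 1) → ℝ) (M : ℝ),
      (∀ t ∈ Icc 0 δ, |∑ i, a i * t ^ (i : ℕ)| ≤ M) → ∀ i, |a i| ≤ C * M)
    {y w : EuclideanSpace ℝ (Fin d)} (hy : y ∈ I)
    (hseg : ∀ t ∈ Icc 0 δ, y + t • w ∈ I ∧ ‖t • w‖ ≤ 1) {k : ℕ} (hk : k ≤ m) :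
    |iteratedFDerivWithin ℝ k φ I y (fun _ => w)| ≤ k.factorial * (C * (D + L)) := by
  have hpoly : ∀ t ∈ Icc 0 δ, |∑ i : Fin (m + 1), ((i : ℕ).factorial : ℝ)⁻¹ *
      iteratedFDerivWithin ℝ i φ I y (fun _ => w) * t ^ (i : ℕ)| ≤ D + L := by
    intro t ht
    rw [← taylorPoly_add_smul, ← hm]
    exact hφ.abs_taylorPoly_le hβ hL hD (hseg t ht).1 hy (by simpa using (hseg t ht).2)
  have hfac : (0 : ℝ) < k.factorial := mod_cast k.factorial_pos
  have hcoeff_k := hcoeff _ _ hpoly ⟨k, Nat.lt_succ_of_le hk⟩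
  rwa [abs_mul, abs_inv, abs_of_pos hfac, inv_mul_le_iff₀ hfac] at hcoeff_k

noncomputable def centerSign {d : ℕ} (y : EuclideanSpace ℝ (Fin d)) (i : Fin d) : ℝ :=
  if y i ≤ 1 / 2 then 1 else -1

theorem abs_centerSign {d : ℕ} (y : EuclideanSpace ℝ (Fin d)) (i : Fin d) :
    |centerSign y i| = 1 := by
  unfold centerSign; split_ifs <;> simp

theorem add_centerSign_mul_mem_Icc {d : ℕ} {y : EuclideanSpace ℝ (Fin d)} {i : Fin d}
    (hy : y i ∈ Icc (0 : ℝ) 1) {c : ℝ} (hc : c ∈ Icc (0 : ℝ) (1 / 2)) :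
    y i + centerSign y i * c ∈ Icc (0 : ℝ) 1 := by
  unfold centerSign
  split_ifs <;> constructor <;> linarith [hy.1, hy.2, hc.1, hc.2]

theorem add_smul_sum_single_centerSign_mem_unitCube {d k : ℕ} {y : EuclideanSpace ℝ (Fin d)}
    (hy : y ∈ unitCube d) (v : Fin k → Fin d) (S : Finset (Fin k)) {t : ℝ} (ht : 0 ≤ t)
    (htk : t * k ≤ 1 / 2) :
    y + t • ∑ j ∈ S, EuclideanSpace.single (v j) (centerSign y (v j)) ∈ unitCube d := by
  intro i
  have hterm : ∀ j ∈ S, (Pi.single (v j) (centerSign y (v j)) : Fin d → ℝ) i =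
      if i = v j then centerSign y i else 0 := by
    intro j _
    by_cases h : i = v j <;> simp [h]
  have hcoord : (y + t • ∑ j ∈ S, EuclideanSpace.single (v j) (centerSign y (v j))) i =
      y i + centerSign y i * (t * #{j ∈ S | i = v j}) := by
    simp [sum_congr rfl hterm, ← sum_filter, mul_comm, mul_left_comm]
  have hcard : (#{j ∈ S | i = v j} : ℝ) ≤ k :=
    mod_cast (card_le_univ _).trans_eq (Fintype.card_fin k)
  rw [hcoord]
  exact add_centerSign_mul_mem_Icc (hy i) ⟨by positivity, by nlinarith⟩

theorem norm_sum_single_centerSign_le {d k : ℕ} (y : EuclideanSpace ℝ (Fin d))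
    (v : Fin k → Fin d) (S : Finset (Fin k)) :
    ‖∑ j ∈ S, EuclideanSpace.single (v j) (centerSign y (v j))‖ ≤ k := by
  refine (norm_sum_le _ _).trans ?_
  simp only [PiLp.norm_single, Real.norm_eq_abs, abs_centerSign, sum_const, nsmul_eq_mul, mul_one]
  exact_mod_cast (card_le_univ _).trans_eq (Fintype.card_fin k)

theorem IsotropicHolderGT1.abs_iteratedFDerivWithin_single_le_of_mem_interior {d m k : ℕ}
    {β L D δ C : ℝ} {φ : EuclideanSpace ℝ (Fin d) → ℝ}
    (hφ : IsotropicHolderGT1 d β L (unitCube d) φ) (hm : ⌈β⌉₊ - 1 = m) (hβ : 0 ≤ β) (hL : 0 ≤ L)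
    (hD : ∀ x ∈ unitCube d, |φ x| ≤ D) (hδ : δ * m ≤ 1 / 2)
    (hcoeff : ∀ (a : Fin (m + 1) → ℝ) (M : ℝ),
      (∀ t ∈ Icc 0 δ, |∑ i, a i * t ^ (i : ℕ)| ≤ M) → ∀ i, |a i| ≤ C * M)
    (hk : k ≤ m) (v : Fin k → Fin d) {y : EuclideanSpace ℝ (Fin d)}
    (hy : y ∈ interior (unitCube d)) :
    |iteratedFDerivWithin ℝ k φ (unitCube d) y (fun i => EuclideanSpace.single (v i) 1)| ≤
      2 ^ k * (C * (D + L)) := by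
  set g := iteratedFDerivWithin ℝ k φ (unitCube d) y
  set z : Fin k → EuclideanSpace ℝ (Fin d) :=
    fun j => EuclideanSpace.single (v j) (centerSign y (v j))
  have hsymm : ∀ (w : Fin k → EuclideanSpace ℝ (Fin d)) (σ : Perm (Fin k)), g (w ∘ σ) = g w := by
    have hφy : ContDiffAt ℝ k φ y :=
      (hφ.1.contDiffAt (mem_interior_iff_mem_nhds.mp hy)).of_le (by rw [hm]; exact_mod_cast hk)
    simp only [g, iteratedFDerivWithin_eq_iteratedFDeriv (uniqueDiffOn_unitCube d) hφy
      (interior_subset hy)]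
    exact hφy.iteratedFDeriv_comp_perm_of_nat
  have hdiag : ∀ T : Finset (Fin k),
      |g (fun _ => ∑ j ∈ Tᶜ, z j)| ≤ k.factorial * (C * (D + L)) := by
    refine fun T => hφ.abs_iteratedFDerivWithin_diag_le hm hβ hL hD hcoeff (interior_subset hy)
      (fun t ht => ?_) hk
    have htk : t * k ≤ 1 / 2 :=
      (mul_le_mul ht.2 (by exact_mod_cast hk) k.cast_nonneg (ht.1.trans ht.2)).trans hδ
    refine ⟨add_smul_sum_single_centerSign_mem_unitCube (interior_subset hy) v Tᶜ ht.1 htk, ?_⟩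
    calc ‖t • ∑ j ∈ Tᶜ, z j‖ = t * ‖∑ j ∈ Tᶜ, z j‖ := by
          rw [norm_smul, Real.norm_of_nonneg ht.1]
      _ ≤ t * k := mul_le_mul_of_nonneg_left (norm_sum_single_centerSign_le y v Tᶜ) ht.1
      _ ≤ 1 := by linarith
  have hsign : g z = (∏ j, centerSign y (v j)) * g (fun j => EuclideanSpace.single (v j) 1) := by
    have hz_smul : z = fun j => centerSign y (v j) • EuclideanSpace.single (v j) (1 : ℝ) := by
      ext j i
      by_cases h : i = v j <;> simp [z, h]
    rw [hz_smul, g.map_smul_univ, smul_eq_mul]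
  have hz : |g z| ≤ 2 ^ k * (C * (D + L)) := by
    simpa using g.toMultilinearMap.abs_apply_le_of_abs_apply_diag_le hsymm z (by simpa using hdiag)
  rwa [hsign, abs_mul, abs_prod, prod_eq_one fun j _ => abs_centerSign y (v j), one_mul] at hz

theorem IsotropicHolderGT1.abs_iteratedFDerivWithin_single_le {d m k : ℕ}
    {β L D δ C : ℝ} {φ : EuclideanSpace ℝ (Fin d) → ℝ}
    (hφ : IsotropicHolderGT1 d β L (unitCube d) φ) (hm : ⌈β⌉₊ - 1 = m) (hβ : 0 ≤ β) (hL : 0 ≤ L)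
    (hD : ∀ x ∈ unitCube d, |φ x| ≤ D) (hδ : δ * m ≤ 1 / 2)
    (hcoeff : ∀ (a : Fin (m + 1) → ℝ) (M : ℝ),
      (∀ t ∈ Icc 0 δ, |∑ i, a i * t ^ (i : ℕ)| ≤ M) → ∀ i, |a i| ≤ C * M)
    (hk : k ≤ m) (v : Fin k → Fin d) {x : EuclideanSpace ℝ (Fin d)} (hx : x ∈ unitCube d) :
    |iteratedFDerivWithin ℝ k φ (unitCube d) x (fun i => EuclideanSpace.single (v i) 1)| ≤
      2 ^ k * (C * (D + L)) := by
  have hcont : ContinuousOn (fun y => |iteratedFDerivWithin ℝ k φ (unitCube d) y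
      (fun i => EuclideanSpace.single (v i) 1)|) (closure (interior (unitCube d))) := by
    rw [closure_interior_unitCube]
    exact ((ContinuousMultilinearMap.apply ℝ _ ℝ _).continuous.comp_continuousOn
      (hφ.1.continuousOn_iteratedFDerivWithin (by rw [hm]; exact_mod_cast hk)
        (uniqueDiffOn_unitCube d))).abs
  rw [← closure_interior_unitCube] at hx
  exact le_on_closure (fun y hy => hφ.abs_iteratedFDerivWithin_single_le_of_mem_interior hm hβ hL
    hD hδ hcoeff hk v hy) hcont continuousOn_const hx

theorem holder_derivative_bound_general (d : ℕ) (β : ℝ) (hβ : 1 < β) :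
    ∃ C > (0 : ℝ), ∀ L > (0 : ℝ), ∀ D > (0 : ℝ),
      ∀ φ : EuclideanSpace ℝ (Fin d) → ℝ,
        IsotropicHolderGT1 d β L (unitCube d) φ →
        (∀ x ∈ unitCube d, |φ x| ≤ D) →
        ∀ k : ℕ, 1 ≤ k → k ≤ ⌈β⌉₊ - 1 →
        ∀ v : Fin k → Fin d, ∀ x ∈ unitCube d,
          |iteratedFDerivWithin ℝ k φ (unitCube d) x
              (fun i => EuclideanSpace.single (v i) (1 : ℝ))| ≤ C * (D + L) := by
  set m := ⌈β⌉₊ - 1 with hm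
  set δ : ℝ := 1 / (2 * (m + 1))
  have hδm : δ * m ≤ 1 / 2 := by
    rw [div_mul_eq_mul_div, one_mul, div_le_div_iff₀ (by positivity) (by norm_num)]
    linarith
  obtain ⟨C, hC, hcoeff⟩ := exists_abs_le_mul_of_abs_sum_mul_pow_le isCompact_Icc
    (Icc_infinite (by positivity : (0 : ℝ) < δ)) (m + 1)
  refine ⟨2 ^ m * C, by positivity, fun L hL D hD φ hφ hφD k _ hk v x hx => ?_⟩
  calc _ ≤ 2 ^ k * (C * (D + L)) := hφ.abs_iteratedFDerivWithin_single_le hm.symm (by linarith)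
          hL.le hφD hδm hcoeff hk v hx
    _ ≤ 2 ^ m * C * (D + L) := by
        rw [mul_assoc]
        gcongr
        norm_num

/-- For `β > 1` there is `C = C(β,d) > 0` such that for every `L > 0`, `D > 0` and
`φ ∈ H_d(β,L;[0,1]^d)` with `sup |φ| ≤ D`, all partial derivatives of order between `1`
and `⌊β⌋` (expressed by applying the iterated derivative within the cube to coordinate
unit vectors) are bounded in sup-norm by `C(D + L)`. -/
theorem holder_derivative_bound (d : ℕ) (hd : 1 ≤ d) (β : ℝ) (hβ : 1 < β) :
    ∃ C > (0 : ℝ), ∀ L > (0 : ℝ), ∀ D > (0 : ℝ),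
      ∀ φ : EuclideanSpace ℝ (Fin d) → ℝ,
        IsotropicHolderGT1 d β L (unitCube d) φ →
        (∀ x ∈ unitCube d, |φ x| ≤ D) →
        ∀ k : ℕ, 1 ≤ k → k ≤ ⌈β⌉₊ - 1 →
        ∀ v : Fin k → Fin d, ∀ x ∈ unitCube d,
          |iteratedFDerivWithin ℝ k φ (unitCube d) x
              (fun i => EuclideanSpace.single (v i) (1 : ℝ))| ≤ C * (D + L) :=
  holder_derivative_bound_general d β hβ
end

section
/- Fix d ≥ 1 and define on pairs (t,r) with t ∈ ℝ^d, r > 0 the pseudo-metric d̃((t,r),(t',r')) := λ(B_t(r) Δ B_{t'}(r'))^{1/2}. There exists a constant K = K(d) > 0 such that for every ε ∈ (0,1], the covering number of the set { (t,r) : B_t(r) ⊆ B_0(1), r > 0 } at radius ε^{1/2} with respect to d̃ is at most K ε^{−(d+1)}; that is, there exist at most K ε^{−(d+1)} pairs (t_i,r_i) in that set such that every (t,r) with B_t(r) ⊆ B_0(1) satisfies d̃((t,r),(t_i,r_i)) ≤ ε^{1/2} for some i. -/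
/-!
The map `(t, r) ↦ B_t(r)` is Lipschitz from pairs with `r ∈ [0, 1]` (sup metric) to sets with the
distance `λ(· Δ ·)`: `B_t(r) \ B_{t'}(r')` lies in the annulus `B_t(r) \ B_t(r' - |t - t'|)`, whose
volume is at most `d (r - r' + |t - t'|) λ(B_0(1))`. Hence, with `L ≈ 4 d λ(B_0(1))`, an
`ε / L`-cover of the admissible pairs by admissible pairs is a `√ε`-net for `d̃`. The admissible
pairs lie in the unit ball of `ℝ^d × ℝ`; a maximal `ε / L`-separated subset is such a cover, and
comparing the volumes of the disjoint balls of radius `ε / 2L` around its points with the volume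
of the ball of radius `1 + ε / 2L` bounds its size by `(1 + 2L / ε)^(d+1) ≤ (3L)^(d+1) ε^-(d+1)`.
-/

open MeasureTheory

/-- The pseudo-metric `d̃((t,r),(t',r')) = λ(B_t(r) Δ B_{t'}(r'))^{1/2}` on pairs of
centers and radii. -/
noncomputable def dTilde (d : ℕ) (p q : EuclideanSpace ℝ (Fin d) × ℝ) : ℝ :=
  Real.sqrt
    (volume (symmDiff (Metric.closedBall p.1 p.2) (Metric.closedBall q.1 q.2))).toReal

open Measure Metric Module Set
open scoped ENNReal NNReal symmDiff

theorem pow_sub_pow_le_mul_sub {a b : ℝ} (n : ℕ) (ha : 0 ≤ a) (hab : a ≤ b) (hb : b ≤ 1) :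
    b ^ n - a ^ n ≤ n * (b - a) := by
  have h := abs_pow_sub_pow_le b a n
  rw [abs_of_nonneg (sub_nonneg.2 (pow_le_pow_left₀ ha hab n)), abs_of_nonneg (sub_nonneg.2 hab),
    abs_of_nonneg (ha.trans hab), abs_of_nonneg ha, max_eq_left hab] at h
  calc b ^ n - a ^ n ≤ (b - a) * n * b ^ (n - 1) := h
    _ ≤ (b - a) * n * 1 := by
        gcongr
        exact pow_le_one₀ (ha.trans hab) hb
    _ = n * (b - a) := by ring

theorem one_add_two_div_div_pow_le {ε L : ℝ} (n : ℕ) (hε : 0 < ε) (hε₁ : ε ≤ 1) (hL : 1 ≤ L) :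
    (1 + 2 / (ε / L)) ^ n ≤ (3 * L) ^ n * ε ^ (-(n : ℝ)) := by
  calc (1 + 2 / (ε / L)) ^ n ≤ (L / ε + 2 * L / ε) ^ n := by
        rw [div_div_eq_mul_div]
        gcongr
        exact (one_le_div hε).2 (hε₁.trans hL)
    _ = (3 * L) ^ n * ε ^ (-(n : ℝ)) := by
        rw [Real.rpow_neg hε.le, Real.rpow_natCast, ← div_eq_mul_inv, ← div_pow]
        ring

theorem le_of_closedBall_subset_closedBall {E : Type*} [NormedAddCommGroup E] [NormedSpace ℝ E]
    [Nontrivial E] {x y : E} {r R : ℝ} (hr : 0 ≤ r) (h : closedBall x r ⊆ closedBall y R) :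
    r ≤ R := by
  have hR : 0 ≤ R := dist_nonneg.trans (mem_closedBall.1 (h (mem_closedBall_self hr)))
  have := diam_mono h isBounded_closedBall
  rw [diam_closedBall_eq x hr, diam_closedBall_eq y hR] at this
  linarith

section AddHaar

variable {E : Type*} [NormedAddCommGroup E] [NormedSpace ℝ E] [FiniteDimensional ℝ E]
  [MeasurableSpace E] [BorelSpace E] (μ : Measure E) [μ.IsAddHaarMeasure]

theorem addHaar_closedBall_diff_closedBall_le [Nontrivial E] {t v : E} {r s : ℝ} (hr₀ : 0 ≤ r)
    (hr₁ : r ≤ 1) :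
    μ (closedBall t r \ closedBall v s) ≤
      ENNReal.ofReal (finrank ℝ E * (r - s + dist t v)) * μ (ball 0 1) := by
  -- `B_t(a) ⊆ B_v(s)` needs `a ≤ s - ‖t - v‖`; clipping `a` to `[0, r]` keeps the volume
  -- formulas valid.
  set a := min r (max (s - dist t v) 0)
  have ha₀ : 0 ≤ a := le_min hr₀ (le_max_right _ _)
  have har : a ≤ r := min_le_left _ _
  have hball : ball t a ⊆ closedBall v s := fun x hx => by
    have hxa : dist x t < max (s - dist t v) 0 := (mem_ball.1 hx).trans_le (min_le_right _ _)
    rcases lt_max_iff.1 hxa with h | h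
    · exact mem_closedBall.2 (by linarith [dist_triangle x t v])
    · exact absurd h (not_lt.2 dist_nonneg)
  have hpow : r ^ finrank ℝ E - a ^ finrank ℝ E ≤ finrank ℝ E * (r - s + dist t v) ∨
      r ^ finrank ℝ E - a ^ finrank ℝ E ≤ 0 := by
    rcases min_cases r (max (s - dist t v) 0) with ⟨h, -⟩ | ⟨h, -⟩
    · exact Or.inr (by rw [show a = r from h, sub_self])
    · refine Or.inl ((pow_sub_pow_le_mul_sub _ ha₀ har hr₁).trans ?_)
      gcongr
      linarith [h ▸ le_max_left (s - dist t v) 0]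
  calc μ (closedBall t r \ closedBall v s) ≤ μ (closedBall t r \ ball t a) :=
        measure_mono (sdiff_subset_sdiff_right hball)
    _ = μ (closedBall t r) - μ (ball t a) :=
        measure_sdiff (ball_subset_closedBall.trans (closedBall_subset_closedBall har))
          measurableSet_ball.nullMeasurableSet measure_ball_lt_top.ne
    _ = ENNReal.ofReal (r ^ finrank ℝ E - a ^ finrank ℝ E) * μ (ball 0 1) := by
        rw [addHaar_closedBall μ t hr₀, addHaar_ball μ t ha₀, ← ENNReal.sub_mul (fun _ _ =>
          measure_ball_lt_top.ne), ENNReal.ofReal_sub _ (by positivity)]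
    _ ≤ ENNReal.ofReal (finrank ℝ E * (r - s + dist t v)) * μ (ball 0 1) :=
        mul_le_mul_left (ENNReal.ofReal_le_ofReal_iff'.2 hpow) _

theorem addHaar_symmDiff_closedBall_le [Nontrivial E] {p q : E × ℝ} (hp : p.2 ∈ Icc (0 : ℝ) 1)
    (hq : q.2 ∈ Icc (0 : ℝ) 1) :
    μ (closedBall p.1 p.2 ∆ closedBall q.1 q.2) ≤
      ENNReal.ofReal (4 * finrank ℝ E * dist p q) * μ (ball 0 1) := by
  have hdist : |p.2 - q.2| + dist p.1 q.1 ≤ 2 * dist p q := by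
    rw [← Real.dist_eq, Prod.dist_eq]
    linarith [le_max_left (dist p.1 q.1) (dist p.2 q.2),
      le_max_right (dist p.1 q.1) (dist p.2 q.2)]
  have hbound : ENNReal.ofReal (finrank ℝ E * (|p.2 - q.2| + dist p.1 q.1)) * μ (ball 0 1) ≤
      ENNReal.ofReal (2 * finrank ℝ E * dist p q) * μ (ball 0 1) := by
    refine mul_le_mul_left (ENNReal.ofReal_le_ofReal ?_) _
    nlinarith [(finrank ℝ E).cast_nonneg (α := ℝ)]
  calc μ (closedBall p.1 p.2 ∆ closedBall q.1 q.2)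
      ≤ μ (closedBall p.1 p.2 \ closedBall q.1 q.2) + μ (closedBall q.1 q.2 \ closedBall p.1 p.2) :=
        measure_union_le _ _
    _ ≤ ENNReal.ofReal (2 * finrank ℝ E * dist p q) * μ (ball 0 1) +
        ENNReal.ofReal (2 * finrank ℝ E * dist p q) * μ (ball 0 1) := by
        gcongr
        · refine (addHaar_closedBall_diff_closedBall_le μ hp.1 hp.2).trans (le_trans ?_ hbound)
          gcongr
          linarith [le_abs_self (p.2 - q.2)]
        · refine (addHaar_closedBall_diff_closedBall_le μ hq.1 hq.2).trans (le_trans ?_ hbound)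
          rw [dist_comm]
          gcongr
          linarith [neg_abs_le (p.2 - q.2)]
    _ = ENNReal.ofReal (4 * finrank ℝ E * dist p q) * μ (ball 0 1) := by
        rw [← add_mul, ← ENNReal.ofReal_add (by positivity) (by positivity)]
        ring_nf

end AddHaar

section Packing

variable {E : Type*} [NormedAddCommGroup E] [NormedSpace ℝ E] [FiniteDimensional ℝ E]

theorem card_le_of_isSeparated_of_subset_closedBall {s : Finset E} {R : ℝ} {ε : ℝ≥0}
    (hR : 0 ≤ R) (hε : 0 < ε) (hs : ↑s ⊆ closedBall (0 : E) R) (hsep : IsSeparated ε (s : Set E)) :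
    (s.card : ℝ) ≤ (1 + 2 * R / ε) ^ finrank ℝ E := by
  borelize E
  set μ : Measure E := addHaar
  have hε' : (0 : ℝ) < ε := hε
  have hdisj : (s : Set E).PairwiseDisjoint fun x => closedBall x (ε / 2) := fun x hx y hy hxy =>
    closedBall_disjoint_closedBall <| by
      have : (ε : ℝ≥0∞) < edist x y := hsep hx hy hxy
      rw [edist_nndist, ENNReal.coe_lt_coe, ← NNReal.coe_lt_coe, coe_nndist] at this
      linarith
  have hunion : (⋃ x ∈ s, closedBall x (ε / 2)) ⊆ closedBall (0 : E) (R + ε / 2) :=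
    iUnion₂_subset fun x hx => closedBall_subset_closedBall' <| by
      linarith [mem_closedBall.1 (hs hx)]
  have hvol : (s.card : ℝ≥0∞) * ENNReal.ofReal ((ε / 2 : ℝ) ^ finrank ℝ E) * μ (ball 0 1) ≤
      ENNReal.ofReal ((R + ε / 2) ^ finrank ℝ E) * μ (ball 0 1) := by
    calc (s.card : ℝ≥0∞) * ENNReal.ofReal ((ε / 2 : ℝ) ^ finrank ℝ E) * μ (ball 0 1)
        = μ (⋃ x ∈ s, closedBall x (ε / 2)) := by
          rw [measure_biUnion_finset hdisj fun _ _ => measurableSet_closedBall]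
          simp [addHaar_closedBall μ _ (half_pos hε').le, mul_assoc]
      _ ≤ μ (closedBall 0 (R + ε / 2)) := measure_mono hunion
      _ = ENNReal.ofReal ((R + ε / 2) ^ finrank ℝ E) * μ (ball 0 1) :=
          addHaar_closedBall μ _ (by positivity)
  rw [ENNReal.mul_le_mul_iff_left (measure_ball_pos μ 0 one_pos).ne' measure_ball_lt_top.ne,
    ← ENNReal.ofReal_natCast, ← ENNReal.ofReal_mul (by positivity),
    ENNReal.ofReal_le_ofReal_iff (by positivity)] at hvol
  calc (s.card : ℝ) = s.card * (ε / 2 : ℝ) ^ finrank ℝ E / (ε / 2 : ℝ) ^ finrank ℝ E := by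
        field_simp
    _ ≤ (R + ε / 2) ^ finrank ℝ E / (ε / 2 : ℝ) ^ finrank ℝ E := by gcongr
    _ = (1 + 2 * R / ε) ^ finrank ℝ E := by
        rw [← div_pow]
        congr 1
        field_simp
        ring

theorem exists_finset_subset_isCover_card_le {A : Set E} {R : ℝ} {ε : ℝ≥0} (hR : 0 ≤ R)
    (hε : 0 < ε) (hA : A ⊆ closedBall 0 R) :
    ∃ C : Finset E, ↑C ⊆ A ∧ IsCover ε A C ∧ (C.card : ℝ) ≤ (1 + 2 * R / ε) ^ finrank ℝ E := by
  set B := (1 + 2 * R / ε) ^ finrank ℝ E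
  have hcard (s : Finset E) (hsA : ↑s ⊆ A) (hsep : IsSeparated ε (s : Set E)) : (s.card : ℝ) ≤ B :=
    card_le_of_isSeparated_of_subset_closedBall hR hε (hsA.trans hA) hsep
  have hpacking : packingNumber ε A ≠ ⊤ := by
    refine ne_top_of_le_ne_top (ENat.natCast_ne_top ⌊B⌋₊)
      (iSup₂_le fun C hCA => iSup_le fun hsep => ?_)
    by_contra! hlt
    obtain ⟨t, htC, ht⟩ := exists_subset_encard_eq (Order.add_one_le_of_lt hlt)
    have htfin : t.Finite := finite_of_encard_eq_coe ht
    have := hcard htfin.toFinset (by simpa using htC.trans hCA) (by simpa using hsep.subset htC)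
    rw [htfin.encard_eq_coe_toFinset_card] at ht
    norm_cast at ht
    rw [ht] at this
    exact absurd this (not_le.2 (by exact_mod_cast Nat.lt_floor_add_one B))
  have hfin : (maximalSeparatedSet ε A).Finite := by
    rw [← encard_ne_top_iff, encard_maximalSeparatedSet hpacking]
    exact hpacking
  refine ⟨hfin.toFinset, by simpa using maximalSeparatedSet_subset, by
    simpa using isCover_maximalSeparatedSet hpacking, hcard _ (by simpa using
      maximalSeparatedSet_subset) (by simpa using isSeparated_maximalSeparatedSet)⟩

end Packing

theorem dTilde_le_sqrt_dist {d : ℕ} [NeZero d] {p q : EuclideanSpace ℝ (Fin d) × ℝ}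
    (hp : p.2 ∈ Icc (0 : ℝ) 1) (hq : q.2 ∈ Icc (0 : ℝ) 1) :
    dTilde d p q ≤ √(4 * d * volume.real (ball (0 : EuclideanSpace ℝ (Fin d)) 1) * dist p q) := by
  refine Real.sqrt_le_sqrt (ENNReal.toReal_le_of_le_ofReal (by positivity) ?_)
  refine (addHaar_symmDiff_closedBall_le volume hp hq).trans_eq ?_
  rw [finrank_euclideanSpace_fin, measureReal_def]
  conv_rhs => rw [mul_right_comm _ _ (dist p q), ENNReal.ofReal_mul (by positivity),
    ENNReal.ofReal_toReal measure_ball_lt_top.ne]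

def admissiblePairs (d : ℕ) : Set (EuclideanSpace ℝ (Fin d) × ℝ) :=
  {p | 0 < p.2 ∧ closedBall p.1 p.2 ⊆ closedBall 0 1}

theorem admissiblePairs_subset_closedBall (d : ℕ) [NeZero d] :
    admissiblePairs d ⊆ closedBall 0 1 := fun p ⟨hr, hsub⟩ => by
  rw [mem_closedBall_zero_iff, Prod.norm_def, max_le_iff, Real.norm_of_nonneg hr.le]
  exact ⟨mem_closedBall_zero_iff.1 (hsub (mem_closedBall_self hr.le)),
    le_of_closedBall_subset_closedBall hr.le hsub⟩

theorem snd_mem_Icc_of_mem_admissiblePairs {d : ℕ} [NeZero d] {p : EuclideanSpace ℝ (Fin d) × ℝ}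
    (hp : p ∈ admissiblePairs d) : p.2 ∈ Icc (0 : ℝ) 1 :=
  ⟨hp.1.le, (le_abs_self _).trans ((norm_snd_le p).trans
    (mem_closedBall_zero_iff.1 (admissiblePairs_subset_closedBall d hp)))⟩

/-- There is `K = K(d) > 0` such that for every `ε ∈ (0,1]` the set
`{(t,r) : B_t(r) ⊆ B_0(1), r > 0}` admits an `ε^{1/2}`-net with respect to `d̃` of
cardinality at most `K ε^{−(d+1)}`, consisting of pairs from that set. -/
theorem covering_number_balls (d : ℕ) (hd : 1 ≤ d) :
    ∃ K > (0 : ℝ), ∀ ε : ℝ, 0 < ε → ε ≤ 1 →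
      ∃ N : Finset (EuclideanSpace ℝ (Fin d) × ℝ),
        (∀ p ∈ N, 0 < p.2 ∧
          Metric.closedBall p.1 p.2 ⊆ Metric.closedBall (0 : EuclideanSpace ℝ (Fin d)) 1) ∧
        (N.card : ℝ) ≤ K * ε ^ (-((d : ℝ) + 1)) ∧
        ∀ t : EuclideanSpace ℝ (Fin d), ∀ r : ℝ, 0 < r →
          Metric.closedBall t r ⊆ Metric.closedBall (0 : EuclideanSpace ℝ (Fin d)) 1 →
          ∃ p ∈ N, dTilde d (t, r) p ≤ Real.sqrt ε := by
  have : NeZero d := ⟨by omega⟩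
  set ν := volume.real (ball (0 : EuclideanSpace ℝ (Fin d)) 1)
  set L := 4 * d * ν + 1
  have hL : 1 ≤ L := le_add_of_nonneg_left (by positivity)
  refine ⟨(3 * L) ^ (d + 1), by positivity, fun ε hε hε₁ => ?_⟩
  set η : ℝ≥0 := ⟨ε / L, by positivity⟩
  obtain ⟨C, hCA, hcover, hcard⟩ := exists_finset_subset_isCover_card_le zero_le_one
    (show 0 < η from div_pos hε (by linarith)) (admissiblePairs_subset_closedBall d)
  refine ⟨C, fun p hp => hCA hp, ?_, fun t r hr hsub => ?_⟩
  · rw [finrank_prod, finrank_euclideanSpace_fin, finrank_self, mul_one] at hcard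
    exact hcard.trans (by exact_mod_cast one_add_two_div_div_pow_le (d + 1) hε hε₁ hL)
  · have htr : (t, r) ∈ admissiblePairs d := ⟨hr, hsub⟩
    obtain ⟨p, hpC, hdist⟩ := hcover htr
    have hdist' : dist (t, r) p ≤ ε / L := by
      rw [← coe_nndist]
      exact_mod_cast edist_le_coe.1 hdist
    refine ⟨p, hpC, (dTilde_le_sqrt_dist (snd_mem_Icc_of_mem_admissiblePairs htr)
      (snd_mem_Icc_of_mem_admissiblePairs (hCA hpC))).trans (Real.sqrt_le_sqrt ?_)⟩
    calc 4 * d * ν * dist (t, r) p ≤ L * (ε / L) := by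
          gcongr
          linarith
      _ = ε := by field_simp
end

section
/- Let q̃, q > 0, A ≥ 1 and B > 0 be constants, and suppose D : (0,1] → [1,∞) satisfies D(u) ≤ A u^{−B} for all 0 < u ≤ 1. Define G(η,δ) := q̃ η^q and J(ε,a) := ∫₀^ε G( log( a·D(u)²/u ), u ) du. Then for all 0 < ε ≤ 1 and a ≥ 1, J(ε,a) ≤ C · ε · (log(e/ε))^q, where C = q̃ · max(1 + 2B, log(a A²))^q · ∫₀¹ (log(e/z))^q dz. -/
/-! On `(0, 1]` the bound on `D` gives `log (a D(u)² / u) ≤ M log (e/u)` with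
`M = max (1 + 2B) (log (aA²))`, so `J(ε, a) ≤ q̃ M^q ∫₀^ε log (e/u)^q du`. Substituting `u = εz`
and using `log (e/(εz)) ≤ log (e/ε) log (e/z)`, which holds because both factors are `≥ 1`,
bounds this integral by `ε log (e/ε)^q ∫₀¹ log (e/z)^q dz`; the last integral is finite since
`log (e/z)^q = O(z^(-1/2))`. -/

open MeasureTheory Set Real

lemma log_exp_one_div {z : ℝ} (hz : 0 < z) : log (exp 1 / z) = 1 - log z := by
  rw [log_div (exp_ne_zero 1) hz.ne', log_exp]

lemma one_le_log_exp_one_div {z : ℝ} (hz0 : 0 < z) (hz1 : z ≤ 1) : 1 ≤ log (exp 1 / z) := by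
  rw [log_exp_one_div hz0]
  linarith [log_nonpos hz0.le hz1]

lemma log_exp_one_div_nonneg {z : ℝ} (hz0 : 0 ≤ z) (hz1 : z ≤ 1) : 0 ≤ log (exp 1 / z) := by
  rcases hz0.eq_or_lt with rfl | hz0
  · simp
  · linarith [one_le_log_exp_one_div hz0 hz1]

lemma log_exp_one_div_mul_le {x y : ℝ} (hx0 : 0 < x) (hx1 : x ≤ 1) (hy0 : 0 < y) (hy1 : y ≤ 1) :
    log (exp 1 / (x * y)) ≤ log (exp 1 / x) * log (exp 1 / y) := by
  rw [log_exp_one_div (mul_pos hx0 hy0), log_exp_one_div hx0, log_exp_one_div hy0,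
    log_mul hx0.ne' hy0.ne']
  nlinarith [log_nonpos hx0.le hx1, log_nonpos hy0.le hy1]

lemma log_exp_one_div_rpow_le {q z : ℝ} (hq : 0 < q) (hz0 : 0 < z) (hz1 : z ≤ 1) :
    log (exp 1 / z) ^ q ≤ (2 * q) ^ q * exp 1 ^ (2⁻¹ : ℝ) * z ^ (-2⁻¹ : ℝ) := by
  have hx : 0 < exp 1 / z := by positivity
  -- `δ = 1 / (2q)` in `log x ≤ x ^ δ / δ` makes the bound a multiple of `z ^ (-1/2)`
  have hlog : log (exp 1 / z) ≤ (exp 1 / z) ^ (2 * q)⁻¹ * (2 * q) := by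
    have := log_le_rpow_div hx.le (by positivity : 0 < (2 * q)⁻¹)
    rwa [div_inv_eq_mul] at this
  calc log (exp 1 / z) ^ q
      ≤ ((exp 1 / z) ^ (2 * q)⁻¹ * (2 * q)) ^ q :=
        rpow_le_rpow (log_exp_one_div_nonneg hz0.le hz1) hlog hq.le
    _ = (2 * q) ^ q * exp 1 ^ (2⁻¹ : ℝ) * z ^ (-2⁻¹ : ℝ) := by
        have hexp : (2 * q)⁻¹ * q = 2⁻¹ := by field_simp
        rw [mul_rpow (by positivity) (by positivity), ← rpow_mul hx.le, hexp,
          div_rpow (exp_pos 1).le hz0.le, rpow_neg hz0.le]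
        ring

lemma integrableOn_log_exp_one_div_rpow {q : ℝ} (hq : 0 < q) :
    IntegrableOn (fun z ↦ log (exp 1 / z) ^ q) (Ioc 0 1) := by
  have hdom : IntegrableOn (fun z : ℝ ↦ (2 * q) ^ q * exp 1 ^ (2⁻¹ : ℝ) * z ^ (-2⁻¹ : ℝ))
      (Ioc 0 1) :=
    ((intervalIntegral.intervalIntegrable_rpow' (r := -2⁻¹) (by norm_num)).1.const_mul _ :)
  refine hdom.mono' (Measurable.aestronglyMeasurable (by fun_prop))
    (ae_restrict_of_forall_mem measurableSet_Ioc ?_)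
  rintro z ⟨hz0, hz1⟩
  rw [norm_of_nonneg (rpow_nonneg (log_exp_one_div_nonneg hz0.le hz1) q)]
  exact log_exp_one_div_rpow_le hq hz0 hz1

lemma intervalIntegral_mono_of_nonneg {f g : ℝ → ℝ} {a b : ℝ} (hab : a ≤ b)
    (hf : ∀ x ∈ Ioc a b, 0 ≤ f x) (hg : IntegrableOn g (Ioc a b))
    (hfg : ∀ x ∈ Ioc a b, f x ≤ g x) :
    ∫ x in a..b, f x ≤ ∫ x in a..b, g x := by
  rw [intervalIntegral.integral_of_le hab, intervalIntegral.integral_of_le hab]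
  exact integral_mono_of_nonneg (ae_restrict_of_forall_mem measurableSet_Ioc hf) hg
    (ae_restrict_of_forall_mem measurableSet_Ioc hfg)

lemma integral_log_exp_one_div_rpow_le {q ε : ℝ} (hq : 0 < q) (hε0 : 0 < ε) (hε1 : ε ≤ 1) :
    ∫ u in (0 : ℝ)..ε, log (exp 1 / u) ^ q ≤
      ε * log (exp 1 / ε) ^ q * ∫ z in (0 : ℝ)..1, log (exp 1 / z) ^ q := by
  have hsubst : ∫ u in (0 : ℝ)..ε, log (exp 1 / u) ^ q =
      ε * ∫ z in (0 : ℝ)..1, log (exp 1 / (ε * z)) ^ q := by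
    rw [intervalIntegral.integral_comp_mul_left (fun u ↦ log (exp 1 / u) ^ q) hε0.ne',
      mul_zero, mul_one, smul_eq_mul, mul_inv_cancel_left₀ hε0.ne']
  have hmono : ∫ z in (0 : ℝ)..1, log (exp 1 / (ε * z)) ^ q ≤
      ∫ z in (0 : ℝ)..1, log (exp 1 / ε) ^ q * log (exp 1 / z) ^ q := by
    refine intervalIntegral_mono_of_nonneg zero_le_one ?_
      ((integrableOn_log_exp_one_div_rpow hq).const_mul _) ?_
    · rintro z ⟨hz0, hz1⟩
      exact rpow_nonneg (log_exp_one_div_nonneg (by positivity) (mul_le_one₀ hε1 hz0.le hz1)) q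
    · rintro z ⟨hz0, hz1⟩
      rw [← mul_rpow (log_exp_one_div_nonneg hε0.le hε1) (log_exp_one_div_nonneg hz0.le hz1)]
      exact rpow_le_rpow (log_exp_one_div_nonneg (by positivity) (mul_le_one₀ hε1 hz0.le hz1))
        (log_exp_one_div_mul_le hε0 hε1 hz0 hz1) hq.le
  calc ∫ u in (0 : ℝ)..ε, log (exp 1 / u) ^ q
      ≤ ε * ∫ z in (0 : ℝ)..1, log (exp 1 / ε) ^ q * log (exp 1 / z) ^ q :=
        hsubst ▸ mul_le_mul_of_nonneg_left hmono hε0.le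
    _ = ε * log (exp 1 / ε) ^ q * ∫ z in (0 : ℝ)..1, log (exp 1 / z) ^ q := by
        rw [intervalIntegral.integral_const_mul, mul_assoc]

lemma log_mul_sq_div_le_max_mul {a d A B u : ℝ} (ha : 0 < a) (hd : 0 < d)
    (hdA : d ≤ A * u ^ (-B)) (hu0 : 0 < u) (hu1 : u ≤ 1) :
    log (a * d ^ 2 / u) ≤ max (1 + 2 * B) (log (a * A ^ 2)) * log (exp 1 / u) := by
  have hA : 0 < A := (pos_iff_pos_of_mul_pos (hd.trans_le hdA)).mpr (rpow_pos_of_pos hu0 _)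
  have hlogd : log d ≤ log A - B * log u := by
    have := log_le_log hd hdA
    rwa [log_mul hA.ne' (rpow_pos_of_pos hu0 _).ne', log_rpow hu0, neg_mul, ← sub_eq_add_neg]
      at this
  set M := max (1 + 2 * B) (log (a * A ^ 2))
  have hMB : 1 + 2 * B ≤ M := le_max_left _ _
  have hMaA : log (a * A ^ 2) ≤ M := le_max_right _ _
  have hlogu : 0 ≤ -log u := neg_nonneg.mpr (log_nonpos hu0.le hu1)
  calc log (a * d ^ 2 / u)
      = log a + 2 * log d - log u := by
        rw [log_div (by positivity) hu0.ne', log_mul ha.ne' (by positivity), log_pow]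
        push_cast; ring
    _ ≤ log (a * A ^ 2) + (1 + 2 * B) * -log u := by
        rw [log_mul ha.ne' (by positivity), log_pow]
        push_cast; linarith
    _ ≤ M + M * -log u := by gcongr
    _ = M * log (exp 1 / u) := by rw [log_exp_one_div hu0]; ring

theorem chaining_integral_bound_general (qt q A B : ℝ) (hqt : 0 < qt) (hq : 0 < q)
    (hB : 0 < B)
    (D : ℝ → ℝ)
    (hD1 : ∀ u : ℝ, 0 < u → u ≤ 1 → 1 ≤ D u)
    (hD2 : ∀ u : ℝ, 0 < u → u ≤ 1 → D u ≤ A * u ^ (-B))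
    (ε a : ℝ) (hε0 : 0 < ε) (hε1 : ε ≤ 1) (ha : 1 ≤ a) :
    (∫ u in (0 : ℝ)..ε, qt * Real.log (a * D u ^ 2 / u) ^ q) ≤
      (qt * max (1 + 2 * B) (Real.log (a * A ^ 2)) ^ q *
          ∫ z in (0 : ℝ)..1, Real.log (Real.exp 1 / z) ^ q) *
        ε * Real.log (Real.exp 1 / ε) ^ q := by
  set M := max (1 + 2 * B) (log (a * A ^ 2))
  have hM : 0 ≤ M := by linarith [le_max_left (1 + 2 * B) (log (a * A ^ 2))]
  have hpointwise : ∀ u ∈ Ioc 0 ε,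
      0 ≤ log (a * D u ^ 2 / u) ∧ log (a * D u ^ 2 / u) ≤ M * log (exp 1 / u) := by
    rintro u ⟨hu0, huε⟩
    have hu1 := huε.trans hε1
    have hD := hD1 u hu0 hu1
    refine ⟨log_nonneg ((one_le_div hu0).mpr ?_),
      log_mul_sq_div_le_max_mul (by positivity) (by positivity) (hD2 u hu0 hu1) hu0 hu1⟩
    nlinarith
  calc ∫ u in (0 : ℝ)..ε, qt * log (a * D u ^ 2 / u) ^ q
      ≤ ∫ u in (0 : ℝ)..ε, qt * M ^ q * log (exp 1 / u) ^ q := by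
        refine intervalIntegral_mono_of_nonneg hε0.le
          (fun u hu ↦ by have := (hpointwise u hu).1; positivity)
          (((integrableOn_log_exp_one_div_rpow hq).mono_set
            (Ioc_subset_Ioc_right hε1)).const_mul _) fun u hu ↦ ?_
        rw [mul_assoc, ← mul_rpow hM (log_exp_one_div_nonneg hu.1.le (hu.2.trans hε1))]
        gcongr
        exacts [(hpointwise u hu).1, (hpointwise u hu).2]
    _ = qt * M ^ q * ∫ u in (0 : ℝ)..ε, log (exp 1 / u) ^ q :=
        intervalIntegral.integral_const_mul _ _
    _ ≤ qt * M ^ q * (ε * log (exp 1 / ε) ^ q * ∫ z in (0 : ℝ)..1, log (exp 1 / z) ^ q) := by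
        gcongr
        exact integral_log_exp_one_div_rpow_le hq hε0 hε1
    _ = _ := by ring

/-- If `G(η,δ) = q̃ η^q` and the packing numbers satisfy `1 ≤ D(u) ≤ A u^{−B}` on `(0,1]`
with `A ≥ 1`, `B > 0`, then for `0 < ε ≤ 1` and `a ≥ 1`,
`J(ε,a) = ∫₀^ε G(log(a·D(u)²/u), u) du ≤ C ε (log(e/ε))^q` with
`C = q̃ max(1 + 2B, log(aA²))^q ∫₀¹ (log(e/z))^q dz`. -/
theorem chaining_integral_bound (qt q A B : ℝ) (hqt : 0 < qt) (hq : 0 < q)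
    (hA : 1 ≤ A) (hB : 0 < B)
    (D : ℝ → ℝ)
    (hD1 : ∀ u : ℝ, 0 < u → u ≤ 1 → 1 ≤ D u)
    (hD2 : ∀ u : ℝ, 0 < u → u ≤ 1 → D u ≤ A * u ^ (-B))
    (ε a : ℝ) (hε0 : 0 < ε) (hε1 : ε ≤ 1) (ha : 1 ≤ a) :
    (∫ u in (0 : ℝ)..ε, qt * Real.log (a * D u ^ 2 / u) ^ q) ≤
      (qt * max (1 + 2 * B) (Real.log (a * A ^ 2)) ^ q *
          ∫ z in (0 : ℝ)..1, Real.log (Real.exp 1 / z) ^ q) *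
        ε * Real.log (Real.exp 1 / ε) ^ q :=
  chaining_integral_bound_general qt q A B hqt hq hB D hD1 hD2 ε a hε0 hε1 ha
end
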